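/- arXiv:2106.14606 — 8 statements merged into one kernel-verified Lean document; each statement's English description precedes it below -/
import Mathlib

section
/- For a positive integer n, the following are equivalent: (1) n + 1 is a power of 2; (2) for every integer i with 1 ≤ i ≤ n, the binomial coefficient C(n − i, i) is even. -/
/-!
By Lucas's theorem, `C(m, i)` is odd iff every binary digit of `i` is a digit of `m`.
If `n + 1 = 2 ^ k`, then below `k` the digits of `n - i = 2 ^ k - (i + 1)` are the complements of
those of `i`, so `C(n - i, i)` is odd only for `i = 0`. Otherwise `n + 1 = 2 ^ j * (2 * a + 1)` with
`a ≥ 1`, and `n - 2 ^ j = 2 ^ (j + 1) * a - 1` has digit `j` set, so `C(n - 2 ^ j, 2 ^ j)` is odd.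
-/

namespace Nat

theorem odd_choose_iff_odd_choose_mod_two_and_odd_choose_div_two (m k : ℕ) :
    Odd (m.choose k) ↔ Odd ((m % 2).choose (k % 2)) ∧ Odd ((m / 2).choose (k / 2)) := by
  have : Fact (Nat.Prime 2) := ⟨prime_two⟩
  have h := Choose.choose_modEq_choose_mod_mul_choose_div_nat (n := m) (k := k) (p := 2)
  rw [← odd_mul, odd_iff, odd_iff, h]

theorem odd_choose_mod_two_iff (m k : ℕ) :
    Odd ((m % 2).choose (k % 2)) ↔ (k.testBit 0 → m.testBit 0) := by
  rcases mod_two_eq_zero_or_one m with hm | hm <;> rcases mod_two_eq_zero_or_one k with hk | hk <;>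
    simp [testBit_zero, hm, hk]

theorem forall_testBit_imp_iff (m k : ℕ) :
    (∀ j, k.testBit j → m.testBit j) ↔
      (k.testBit 0 → m.testBit 0) ∧ ∀ j, (k / 2).testBit j → (m / 2).testBit j := by
  simp only [testBit_div_two]
  exact ⟨fun h => ⟨h 0, fun j => h (j + 1)⟩, fun ⟨h0, h⟩ j => j.casesOn h0 h⟩

theorem odd_choose_iff_testBit_imp (m k : ℕ) :
    Odd (m.choose k) ↔ ∀ j, k.testBit j → m.testBit j := by
  induction k using Nat.strong_induction_on generalizing m with
  | _ k ih =>
  rcases eq_zero_or_pos k with rfl | hk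
  · simp
  rw [odd_choose_iff_odd_choose_mod_two_and_odd_choose_div_two, odd_choose_mod_two_iff,
    ih (k / 2) (div_lt_self hk one_lt_two)]
  exact (forall_testBit_imp_iff m k).symm

theorem even_choose_two_pow_sub_succ {k i : ℕ} (hi : 0 < i) :
    Even ((2 ^ k - (i + 1)).choose i) := by
  rcases lt_or_ge i (2 ^ k) with hik | hik
  · rw [← not_odd_iff_even, odd_choose_iff_testBit_imp]
    refine fun h => hi.ne' (zero_of_testBit_eq_false fun j => ?_)
    have hj := h j
    rw [testBit_two_pow_sub_succ hik] at hj
    revert hj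
    cases i.testBit j <;> simp
  · rw [choose_eq_zero_of_lt (by omega)]
    exact Even.zero

theorem odd_choose_two_pow_of_testBit {m j : ℕ} (h : m.testBit j) : Odd (m.choose (2 ^ j)) := by
  rw [odd_choose_iff_testBit_imp]
  intro i hi
  rw [testBit_two_pow] at hi
  simp_all

theorem testBit_two_pow_succ_mul_sub_one {a : ℕ} (ha : 0 < a) (j : ℕ) :
    (2 ^ (j + 1) * a - 1).testBit j := by
  have h : 2 ^ (j + 1) * a - 1 = 2 ^ (j + 1) * (a - 1) + (2 ^ (j + 1) - 1) := by
    have : 2 ^ (j + 1) * a = 2 ^ (j + 1) * (a - 1) + 2 ^ (j + 1) := by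
      rw [← mul_add_one, Nat.sub_add_cancel ha]
    have := Nat.one_le_two_pow (n := j + 1)
    omega
  rw [h, testBit_two_pow_mul_add _ (sub_lt (Nat.two_pow_pos _) one_pos)]
  simp

end Nat

theorem n_succ_pow_two_iff_choose_even_general (n : ℕ) :
    (∃ k : ℕ, n + 1 = 2 ^ k) ↔ ∀ i : ℕ, 1 ≤ i → i ≤ n → 2 ∣ (n - i).choose i := by
  constructor
  · rintro ⟨k, hk⟩ i hi _
    have hsub : n - i = 2 ^ k - (i + 1) := by omega
    exact hsub ▸ (Nat.even_choose_two_pow_sub_succ hi).two_dvd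
  · intro h
    by_contra hpow
    obtain ⟨j, m, ⟨a, rfl⟩, hn⟩ := Nat.exists_eq_two_pow_mul_odd (n := n + 1) (by omega)
    have ha : 0 < a := by
      refine Nat.pos_of_ne_zero fun ha => hpow ⟨j, ?_⟩
      simpa [ha] using hn
    have hsplit : n + 1 = 2 ^ (j + 1) * a + 2 ^ j := by rw [hn]; ring
    have hle : 2 ^ j ≤ n := by nlinarith [Nat.one_le_two_pow (n := j + 1)]
    have hsub : n - 2 ^ j = 2 ^ (j + 1) * a - 1 := by omega
    have hodd := Nat.odd_choose_two_pow_of_testBit (Nat.testBit_two_pow_succ_mul_sub_one ha j)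
    rw [← hsub, ← Nat.not_even_iff_odd, even_iff_two_dvd] at hodd
    exact hodd (h _ Nat.one_le_two_pow hle)

/-- For a positive integer `n`, `n + 1` is a power of `2` iff for every `i` with `1 ≤ i ≤ n`
the binomial coefficient `C(n − i, i)` is even. -/
theorem n_succ_pow_two_iff_choose_even (n : ℕ) (hn : 0 < n) :
    (∃ k : ℕ, n + 1 = 2 ^ k) ↔ ∀ i : ℕ, 1 ≤ i → i ≤ n → 2 ∣ (n - i).choose i :=
  n_succ_pow_two_iff_choose_even_general n
end

section
/- Consider F2[t] with the Steenrod squares Sq^i acting by Sq^i(t^m) = C(m,i)·t^{m+i} (binomial coefficient mod 2). For a positive integer n, the degree-n homogeneous component of F2[t] modulo the subspace spanned by {Sq^i(t^{n−i}) : 1 ≤ i ≤ n} is nonzero if and only if n = 2^k − 1 for some k ≥ 1. -/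
open Polynomial

private lemma lucas_step (n k : ℕ) :
    n.choose k % 2 = ((n % 2).choose (k % 2) * ((n / 2).choose (k / 2))) % 2 :=
  @Choose.choose_modEq_choose_mod_mul_choose_div_nat n k 2 ⟨Nat.prime_two⟩

private lemma step_ee (a b : ℕ) : (2 * a).choose (2 * b) % 2 = a.choose b % 2 := by
  rw [lucas_step]
  simp [Nat.mul_mod_right, Nat.mul_div_cancel_left]

private lemma step_oe (a b : ℕ) : (2 * a + 1).choose (2 * b) % 2 = a.choose b % 2 := by
  rw [lucas_step]
  have h1 : (2 * a + 1) % 2 = 1 := by omega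
  have h2 : (2 * a + 1) / 2 = a := by omega
  simp [h1, h2, Nat.mul_mod_right, Nat.mul_div_cancel_left]

private lemma step_eo (a b : ℕ) : (2 * a).choose (2 * b + 1) % 2 = 0 := by
  rw [lucas_step]
  have h1 : (2 * b + 1) % 2 = 1 := by omega
  simp [h1, Nat.mul_mod_right]

private def Pev (n : ℕ) : Prop := ∀ i, 1 ≤ i → i ≤ n → (n - i).choose i % 2 = 0

private lemma core : ∀ n, 1 ≤ n → (Pev n ↔ ∃ k, 1 ≤ k ∧ n = 2 ^ k - 1) := by
  intro n
  induction n using Nat.strong_induction_on with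
  | _ n ih =>
    intro hn
    rcases Nat.even_or_odd n with he | ho
    · -- n even : both sides false
      rcases he with ⟨m, hm⟩
      apply iff_of_false
      · intro h
        have h1 := h 1 le_rfl hn
        rw [Nat.choose_one_right] at h1
        omega
      · rintro ⟨k, hk, rfl⟩
        have : 2 ≤ 2 ^ k := Nat.one_lt_two_pow_iff.mpr (by omega)
        have h2 : 2 ∣ 2 ^ k := dvd_pow_self 2 (by omega)
        omega
    · obtain ⟨m, rfl⟩ := ho
      rcases Nat.eq_zero_or_pos m with rfl | hm
      · -- n = 1
        apply iff_of_true
        · intro i h1 h2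
          have : i = 1 := by omega
          subst this
          simp
        · exact ⟨1, le_rfl, rfl⟩
      · -- n = 2m+1, m ≥ 1 : P(2m+1) ↔ P(m)
        have key : Pev (2 * m + 1) ↔ Pev m := by
          constructor
          · intro h j hj1 hj2
            have h2 := h (2 * j) (by omega) (by omega)
            have hsub : 2 * m + 1 - 2 * j = 2 * (m - j) + 1 := by omega
            rw [hsub, step_oe] at h2
            have hsub2 : m - j = m - j := rfl
            exact h2
          · intro h i hi1 hi2
            rcases Nat.even_or_odd i with ⟨j, hj⟩ | ⟨j, hj⟩
            · subst hj
              have hsub : 2 * m + 1 - (j + j) = 2 * (m - j) + 1 := by omega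
              have : j + j = 2 * j := by ring
              rw [this] at hsub ⊢
              rw [hsub, step_oe]
              exact h j (by omega) (by omega)
            · subst hj
              have hsub : 2 * m + 1 - (2 * j + 1) = 2 * (m - j) := by omega
              rw [hsub, step_eo]
        rw [key, ih m (by omega) hm]
        constructor
        · rintro ⟨k, hk, hmk⟩
          refine ⟨k + 1, by omega, ?_⟩
          have : 2 ≤ 2 ^ k := Nat.one_lt_two_pow_iff.mpr (by omega)
          have : 2 ^ (k + 1) = 2 * 2 ^ k := by ring
          omega
        · rintro ⟨k, hk, hnk⟩
          have h2 : 2 ≤ 2 ^ k := Nat.one_lt_two_pow_iff.mpr (by omega)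
          have hk2 : 2 ≤ k := by
            by_contra h
            interval_cases k <;> omega
          refine ⟨k - 1, by omega, ?_⟩
          have : 2 ^ k = 2 * 2 ^ (k - 1) := by
            rw [← pow_succ']
            congr 1
            omega
          have : 2 ≤ 2 ^ (k - 1) := Nat.one_lt_two_pow_iff.mpr (by omega)
          omega

/-- Peterson's theorem in one variable: in `F2[t]` with `Sq^i(t^m) = C(m,i) t^{m+i}` mod 2,
the degree-`n` component modulo the span of `{Sq^i(t^{n-i}) : 1 ≤ i ≤ n}` is nonzero
(equivalently `t^n` is not in that span) iff `n = 2^k − 1` for some `k ≥ 1`. -/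
theorem one_variable_cohit_nonzero_iff (n : ℕ) (hn : 0 < n) :
    ((X ^ n : Polynomial (ZMod 2)) ∉ Submodule.span (ZMod 2)
        {g : Polynomial (ZMod 2) | ∃ i, 1 ≤ i ∧ i ≤ n ∧
          g = C (((n - i).choose i : ZMod 2)) * X ^ n}) ↔
      ∃ k, 1 ≤ k ∧ n = 2 ^ k - 1 := by
  rw [← core n hn]
  by_cases h : Pev n
  · apply iff_of_true _ h
    intro hmem
    have hsub : {g : Polynomial (ZMod 2) | ∃ i, 1 ≤ i ∧ i ≤ n ∧
        g = C (((n - i).choose i : ZMod 2)) * X ^ n} ⊆ {0} := by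
      rintro g ⟨i, hi1, hi2, rfl⟩
      have hz : (((n - i).choose i : ℕ) : ZMod 2) = 0 := by
        rw [ZMod.natCast_eq_zero_iff]
        exact Nat.dvd_of_mod_eq_zero (h i hi1 hi2)
      simp [hz]
    have := Submodule.span_mono hsub hmem
    rw [Submodule.span_singleton_eq_bot.mpr rfl] at this
    simp only [Submodule.mem_bot] at this
    exact pow_ne_zero n X_ne_zero this
  · apply iff_of_false _ h
    simp only [Pev, not_forall] at h
    obtain ⟨i, hi1, hi2, hodd⟩ := h
    intro hnot
    apply hnot
    apply Submodule.subset_span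
    refine ⟨i, hi1, hi2, ?_⟩
    have h1 : (((n - i).choose i : ℕ) : ZMod 2) = 1 := by
      have h2 : (n - i).choose i % 2 = 1 := by omega
      rw [← ZMod.natCast_mod, h2, Nat.cast_one]
    rw [h1]
    simp
end

section
/- For every integer s ≥ 1, μ(12·2^s − 4) = 4, where μ(n) is the least number of summands of the form 2^d − 1 (d ≥ 1) needed to write n. -/
private lemma pow2_not_odd {x : ℕ} (hx : 1 ≤ x) : 2 ^ x % 2 = 0 := by
  obtain ⟨y, rfl⟩ := Nat.exists_eq_add_of_le hx
  simp [pow_add, pow_succ, Nat.mul_mod]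

private lemma aux_two (s b : ℕ) (hs : 1 ≤ s) (hb : 1 ≤ b)
    (h : 2 ^ b = 4 * (3 * 2 ^ s - 1)) : False := by
  have hks : (1:ℕ) ≤ 2 ^ (s - 1) := Nat.one_le_two_pow
  have hsplit : 2 ^ s = 2 * 2 ^ (s - 1) := by
    rw [← pow_succ']
    congr 1
    omega
  rcases le_or_gt b 2 with hb2 | hb2
  · have : 2 ^ b ≤ 2 ^ 2 := Nat.pow_le_pow_right (by norm_num) hb2
    omega
  · have hbs : 2 ^ b = 2 ^ (b - 2) * 4 := by
      rw [show (4:ℕ) = 2 ^ 2 by norm_num, ← pow_add]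
      congr 1
      omega
    have h2 : 2 ^ (b - 2) = 3 * 2 ^ s - 1 := by omega
    rcases Nat.eq_zero_or_pos (b - 2) with h0 | h1
    · rw [h0] at h2
      simp at h2
      omega
    · have := pow2_not_odd h1
      omega

/-- For every `s ≥ 1`, `μ(12·2^s − 4) = 4`, where `μ(n)` is the least number of summands of
the form `2^d − 1` (`d ≥ 1`) needed to write `n`. -/
theorem mu_12_pow_sub_4 (s : ℕ) (hs : 1 ≤ s) :
    IsLeast {m : ℕ | ∃ d : Fin m → ℕ, (∀ i, 1 ≤ d i) ∧
      12 * 2 ^ s - 4 = ∑ i, (2 ^ d i - 1)} 4 := by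
  have h2s : (2:ℕ) ≤ 2 ^ s := by
    calc (2:ℕ) = 2 ^ 1 := by norm_num
    _ ≤ 2 ^ s := Nat.pow_le_pow_right (by norm_num) hs
  constructor
  · refine ⟨![s + 3, s + 1, s, s], ?_, ?_⟩
    · intro i
      fin_cases i <;> simp <;> omega
    · rw [Fin.sum_univ_four]
      simp only [Matrix.cons_val_zero, Matrix.cons_val_one, Matrix.head_cons,
        Matrix.cons_val_two, Matrix.tail_cons, Matrix.cons_val_three]
      have e1 : 2 ^ (s + 3) = 2 ^ s * 8 := by rw [pow_add]; norm_num
      have e2 : 2 ^ (s + 1) = 2 ^ s * 2 := by rw [pow_add]; norm_num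
      omega
  · rintro m ⟨d, hd, he⟩
    by_contra hm
    push_neg at hm
    interval_cases m
    · simp at he
      omega
    · rw [Fin.sum_univ_one] at he
      have h0 := pow2_not_odd (hd 0)
      have : (2:ℕ) ≤ 2 ^ (d 0) := by
        calc (2:ℕ) = 2 ^ 1 := by norm_num
        _ ≤ 2 ^ (d 0) := Nat.pow_le_pow_right (by norm_num) (hd 0)
      omega
    · rw [Fin.sum_univ_two] at he
      have ha : (2:ℕ) ≤ 2 ^ (d 0) := by
        calc (2:ℕ) = 2 ^ 1 := by norm_num
        _ ≤ 2 ^ (d 0) := Nat.pow_le_pow_right (by norm_num) (hd 0)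
      have hb : (2:ℕ) ≤ 2 ^ (d 1) := by
        calc (2:ℕ) = 2 ^ 1 := by norm_num
        _ ≤ 2 ^ (d 1) := Nat.pow_le_pow_right (by norm_num) (hd 1)
      -- 12·2^s - 2 = 2^a + 2^b
      have key : 12 * 2 ^ s - 2 = 2 ^ (d 0) + 2 ^ (d 1) := by omega
      -- divide by 2: 6·2^s - 1 = 2^(a-1) + 2^(b-1), odd, so a=1 or b=1
      have hsa : 2 ^ (d 0) = 2 * 2 ^ (d 0 - 1) := by
        rw [← pow_succ']; congr 1; have := hd 0; omega
      have hsb : 2 ^ (d 1) = 2 * 2 ^ (d 1 - 1) := by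
        rw [← pow_succ']; congr 1; have := hd 1; omega
      have hodd : 2 ^ (d 0 - 1) + 2 ^ (d 1 - 1) = 6 * 2 ^ s - 1 := by omega
      have hcase : d 0 - 1 = 0 ∨ d 1 - 1 = 0 := by
        by_contra hc
        push_neg at hc
        have h1 := pow2_not_odd (Nat.pos_of_ne_zero hc.1)
        have h2 := pow2_not_odd (Nat.pos_of_ne_zero hc.2)
        omega
      rcases hcase with h0 | h0
      · have hd0 : d 0 = 1 := by have := hd 0; omega
        rw [hd0] at key
        exact aux_two s (d 1) hs (hd 1) (by norm_num at key; omega)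
      · have hd1 : d 1 = 1 := by have := hd 1; omega
        rw [hd1] at key
        exact aux_two s (d 0) hs (hd 0) (by norm_num at key; omega)
    · rw [Fin.sum_univ_three] at he
      have ha : (2:ℕ) ≤ 2 ^ (d 0) := by
        calc (2:ℕ) = 2 ^ 1 := by norm_num
        _ ≤ 2 ^ (d 0) := Nat.pow_le_pow_right (by norm_num) (hd 0)
      have hb : (2:ℕ) ≤ 2 ^ (d 1) := by
        calc (2:ℕ) = 2 ^ 1 := by norm_num
        _ ≤ 2 ^ (d 1) := Nat.pow_le_pow_right (by norm_num) (hd 1)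
      have hc : (2:ℕ) ≤ 2 ^ (d 2) := by
        calc (2:ℕ) = 2 ^ 1 := by norm_num
        _ ≤ 2 ^ (d 2) := Nat.pow_le_pow_right (by norm_num) (hd 2)
      have p0 := pow2_not_odd (hd 0)
      have p1 := pow2_not_odd (hd 1)
      have p2 := pow2_not_odd (hd 2)
      omega
end

section
/- For every integer s ≥ 2, μ(6(2^s − 1) + 10·2^s) = 6, i.e. μ(16·2^s − 6) = 6, where μ(n) is the least number of summands of the form 2^d − 1 (d ≥ 1) needed to write n. -/
/-- Binary digit sum (popcount). -/
def sb (x : ℕ) : ℕ := (Nat.digits 2 x).sum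

lemma sb_rec (x : ℕ) : sb x = x % 2 + sb (x / 2) := by
  rcases Nat.eq_zero_or_pos x with h | h
  · subst h; simp [sb]
  · unfold sb
    rw [Nat.digits_def' (by norm_num : 1 < 2) h]
    simp

lemma sb_succ_le (x : ℕ) : sb (x + 1) ≤ sb x + 1 := by
  induction x using Nat.strong_induction_on with
  | _ x ih =>
    rcases Nat.eq_zero_or_pos x with h | hx
    · subst h; simp [sb]
    rcases Nat.mod_two_eq_zero_or_one x with he | ho
    · have h1 : (x + 1) % 2 = 1 := by omega
      have h2 : (x + 1) / 2 = x / 2 := by omega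
      rw [sb_rec (x + 1), h1, h2, sb_rec x]
      omega
    · have h1 : (x + 1) % 2 = 0 := by omega
      have h2 : (x + 1) / 2 = x / 2 + 1 := by omega
      have := ih (x / 2) (by omega)
      rw [sb_rec (x + 1), h1, h2, sb_rec x]
      omega

lemma sb_pow_add (k : ℕ) : ∀ x, sb (2 ^ k + x) ≤ sb x + 1 := by
  induction k with
  | zero =>
    intro x
    rw [pow_zero, Nat.add_comm]
    exact sb_succ_le x
  | succ k ih =>
    intro x
    have hp : 2 ^ (k + 1) = 2 * 2 ^ k := by ring
    have h1 : (2 ^ (k + 1) + x) % 2 = x % 2 := by omega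
    have h2 : (2 ^ (k + 1) + x) / 2 = 2 ^ k + x / 2 := by omega
    rw [sb_rec (2 ^ (k + 1) + x), h1, h2, sb_rec x]
    have := ih (x / 2)
    omega

lemma sb_sum (m : ℕ) (d : Fin m → ℕ) : sb (∑ i, 2 ^ d i) ≤ m := by
  induction m with
  | zero => simp [sb]
  | succ m ih =>
    rw [Fin.sum_univ_succ]
    have h1 := sb_pow_add (d 0) (∑ i : Fin m, 2 ^ d i.succ)
    have h2 := ih (fun i => d i.succ)
    omega

lemma sb_two_mul (x : ℕ) : sb (2 * x) = sb x := by
  rcases Nat.eq_zero_or_pos x with h | h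
  · subst h; rfl
  · rw [sb_rec (2 * x)]
    simp

lemma sb_two_pow_mul (t x : ℕ) : sb (2 ^ t * x) = sb x := by
  induction t with
  | zero => simp
  | succ t ih =>
    have : 2 ^ (t + 1) * x = 2 * (2 ^ t * x) := by ring
    rw [this, sb_two_mul, ih]

lemma sb_pow_sub_one (u : ℕ) : sb (2 ^ u - 1) = u := by
  induction u with
  | zero => simp [sb]
  | succ u ih =>
    have hp : 2 ^ (u + 1) = 2 * 2 ^ u := by ring
    have h0 : (1 : ℕ) ≤ 2 ^ u := Nat.one_le_two_pow
    have h1 : (2 ^ (u + 1) - 1) % 2 = 1 := by omega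
    have h2 : (2 ^ (u + 1) - 1) / 2 = 2 ^ u - 1 := by omega
    rw [sb_rec (2 ^ (u + 1) - 1), h1, h2, ih]
    omega

/-- For every `s ≥ 2`, `μ(6(2^s − 1) + 10·2^s) = 6`, where `μ(n)` is the least number of
summands of the form `2^d − 1` (`d ≥ 1`) needed to write `n`. -/
theorem mu_n_s_eq_6 (s : ℕ) (hs : 2 ≤ s) :
    IsLeast {m : ℕ | ∃ d : Fin m → ℕ, (∀ i, 1 ≤ d i) ∧
      6 * (2 ^ s - 1) + 10 * 2 ^ s = ∑ i, (2 ^ d i - 1)} 6 := by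
  obtain ⟨t, rfl⟩ : ∃ t, s = t + 1 := ⟨s - 1, by omega⟩
  have ht : 1 ≤ t := by omega
  have hY : (1 : ℕ) ≤ 2 ^ t := Nat.one_le_two_pow
  have e1 : 2 ^ (t + 1) = 2 * 2 ^ t := by ring
  have e2 : 2 ^ (t + 2) = 4 * 2 ^ t := by ring
  have e3 : 2 ^ (t + 3) = 8 * 2 ^ t := by ring
  have e4 : 2 ^ (t + 4) = 16 * 2 ^ t := by ring
  constructor
  · refine ⟨fun i => t + (4 - i.val), fun i => le_add_right ht, ?_⟩
    · simp only [Fin.sum_univ_six, show ((0 : Fin 6) : ℕ) = 0 from rfl,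
        show ((1 : Fin 6) : ℕ) = 1 from rfl, show ((2 : Fin 6) : ℕ) = 2 from rfl,
        show ((3 : Fin 6) : ℕ) = 3 from rfl, show ((4 : Fin 6) : ℕ) = 4 from rfl,
        show ((5 : Fin 6) : ℕ) = 5 from rfl]
      norm_num
      omega
  · rintro m ⟨d, hd, hsum⟩
    by_contra hlt
    push_neg at hlt
    have key : ∑ i, 2 ^ d i = 6 * (2 ^ (t + 1) - 1) + 10 * 2 ^ (t + 1) + m := by
      have h : ∑ i, 2 ^ d i = ∑ i : Fin m, ((2 ^ d i - 1) + 1) := by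
        refine Finset.sum_congr rfl fun i _ => ?_
        have : (1 : ℕ) ≤ 2 ^ d i := Nat.one_le_two_pow
        omega
      rw [h, Finset.sum_add_distrib, ← hsum]
      simp
    have heven : 2 ∣ ∑ i, 2 ^ d i :=
      Finset.dvd_sum fun i _ => dvd_pow_self 2 (by have := hd i; omega)
    have hm2 : 2 ∣ m := by omega
    interval_cases m
    · -- m = 0
      simp only [Finset.univ_eq_empty, Finset.sum_empty] at key
      omega
    · -- m = 1
      omega
    · -- m = 2
      have hs2 := sb_sum 2 d
      rw [key] at hs2
      have heq : 6 * (2 ^ (t + 1) - 1) + 10 * 2 ^ (t + 1) + 2 =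
          2 ^ 2 * (2 ^ (t + 3) - 1) := by
        have h4 : (2 : ℕ) ^ 2 = 4 := by norm_num
        omega
      rw [heq, sb_two_pow_mul, sb_pow_sub_one] at hs2
      omega
    · -- m = 3
      omega
    · -- m = 4
      have hs4 := sb_sum 4 d
      rw [key] at hs4
      have heq : 6 * (2 ^ (t + 1) - 1) + 10 * 2 ^ (t + 1) + 4 =
          2 ^ 1 * (2 ^ (t + 4) - 1) := by
        have h2 : (2 : ℕ) ^ 1 = 2 := by norm_num
        omega
      rw [heq, sb_two_pow_mul, sb_pow_sub_one] at hs4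
      omega
    · -- m = 5
      omega
end

section
/- In F2[t_1, ..., t_6] with the Steenrod algebra action, the cohit space QP_3^{⊗6} (degree-3 homogeneous polynomials modulo hit elements) has dimension 41 over F2. -/
open MvPolynomial

/-- The total Steenrod square on `F2[t_1,…,t_h]`: the algebra endomorphism `t_j ↦ t_j + t_j^2`.
Its degree-`(m+k)` homogeneous component on a degree-`m` homogeneous polynomial is `Sq^k`,
which on monomials agrees with the Cartan formula and `Sq^k(t_j^m) = C(m,k) t_j^{m+k}` mod 2. -/
noncomputable def sqT (h : ℕ) :
    MvPolynomial (Fin h) (ZMod 2) →ₐ[ZMod 2] MvPolynomial (Fin h) (ZMod 2) :=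
  aeval (fun j => X j + X j ^ 2)

/-- The hit subspace in degree `n`: the span of all `Sq^k f` with `1 ≤ k ≤ n` and
`f` homogeneous of degree `n − k` (i.e. the degree-`n` component of the total square of `f`). -/
noncomputable def hitSub (h n : ℕ) : Submodule (ZMod 2) (MvPolynomial (Fin h) (ZMod 2)) :=
  Submodule.span (ZMod 2)
    {g | ∃ k f, 1 ≤ k ∧ k ≤ n ∧ MvPolynomial.IsHomogeneous f (n - k) ∧
      g = MvPolynomial.homogeneousComponent n (sqT h f)}

/-- The cohit space `QP_n^{⊗h}`: degree-`n` homogeneous polynomials modulo hit elements. -/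
abbrev QP (h n : ℕ) :=
  ↥(homogeneousSubmodule (Fin h) (ZMod 2) n) ⧸
    ((hitSub h n).comap (homogeneousSubmodule (Fin h) (ZMod 2) n).subtype)

/-! In degree 3 the only Steenrod square that can be nonzero on a polynomial of lower degree is
`Sq^1(t_i t_j) = t_i t_j^2 + t_i^2 t_j`, so the hit elements are spanned by these binomials.
Two degree-3 monomials are therefore congruent modulo hit elements exactly when they involve the
same set of variables, and summing coefficients over monomials with a given set of variables
identifies `QP_3^{⊗h}` with the free `F2`-module on the nonempty sets of at most three variables:
`6 + 15 + 20 = 41` of them for `h = 6`. -/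

namespace Finsupp

variable {α β R : Type*}

theorem one_le_of_mem_support {d : α →₀ ℕ} {x : α} (hx : x ∈ d.support) : 1 ≤ d x :=
  Nat.one_le_iff_ne_zero.mpr (mem_support_iff.mp hx)

theorem card_support_le_degree (d : α →₀ ℕ) : d.support.card ≤ d.degree := by
  simpa [degree_apply] using
    Finset.card_nsmul_le_sum d.support d 1 fun x hx => one_le_of_mem_support hx

theorem support_image_setOf_degree_eq {n : ℕ} (hn : 0 < n) :
    support '' {d : α →₀ ℕ | d.degree = n} = {S | S.Nonempty ∧ S.card ≤ n} := by
  classical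
  ext S
  constructor
  · rintro ⟨d, hd, rfl⟩
    refine ⟨support_nonempty_iff.mpr ?_, hd ▸ d.card_support_le_degree⟩
    rintro rfl
    simp only [Set.mem_ofPred_eq, map_zero] at hd
    omega
  · rintro ⟨⟨i, hi⟩, hS⟩
    refine ⟨∑ x ∈ S, single x 1 + single i (n - S.card), ?_, ?_⟩
    · simp only [Set.mem_ofPred_eq, map_add, map_sum, degree_single, Finset.sum_const, smul_eq_mul,
        mul_one]
      omega
    · ext x
      by_cases hx : x ∈ S
      · simp [single_apply, hx]
      · simp [single_apply, hx, show i ≠ x by rintro rfl; exact hx hi]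

theorem mem_of_mapDomain_eq_zero [Ring R] {f : α → β} {s : Set α}
    {K : Submodule R (α →₀ R)}
    (hK : ∀ a ∈ s, ∀ b ∈ s, f a = f b → single a 1 - single b 1 ∈ K)
    {p : α →₀ R} (hs : p ∈ supported R R s) (hp : p.mapDomain f = 0) : p ∈ K := by
  cases isEmpty_or_nonempty α
  · rw [Subsingleton.elim p 0]
    exact zero_mem _
  -- `g` moves each point of `s` to a fixed representative of its fibre in `s`.
  set g := Function.invFunOn f s ∘ f
  have hg : p.mapDomain g = 0 := by rw [mapDomain_comp, hp, mapDomain_zero]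
  have hp_eq : p = p.sum fun a c => c • (single a 1 - single (g a) 1) := by
    simp only [smul_sub, smul_single_one]
    rw [sum_sub, sum_single, ← mapDomain, hg, sub_zero]
  rw [hp_eq]
  refine Submodule.finsuppSum_mem _ _ _ _ fun a ha => Submodule.smul_mem _ _ ?_
  have has : a ∈ s := hs (mem_support_iff.mpr ha)
  have hex : ∃ b ∈ s, f b = f a := ⟨a, has, rfl⟩
  exact hK a has (g a) (Function.invFunOn_mem hex) (Function.invFunOn_eq hex).symm

end Finsupp

namespace MvPolynomial

variable {σ R : Type*}

section CommSemiring

variable [CommSemiring R]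

variable (σ R) in
noncomputable def coeffsBySupport : MvPolynomial σ R →ₗ[R] Finset σ →₀ R :=
  Finsupp.lmapDomain R R Finsupp.support ∘ₗ (AddMonoidAlgebra.coeffLinearEquiv R).toLinearMap

@[simp]
theorem coeffsBySupport_monomial (d : σ →₀ ℕ) (c : R) :
    coeffsBySupport σ R (monomial d c) = Finsupp.single d.support c := by
  simp [coeffsBySupport, ← single_eq_monomial, AddMonoidAlgebra.coeff_single]

theorem map_coeffsBySupport_homogeneousSubmodule (n : ℕ) :
    (homogeneousSubmodule σ R n).map (coeffsBySupport σ R) =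
      Finsupp.supported R R (Finsupp.support '' {d | d.degree = n}) := by
  rw [coeffsBySupport, Submodule.map_comp, homogeneousSubmodule_eq_finsupp_supported,
    AddMonoidAlgebra.supported, Submodule.map_comap_eq_of_surjective
      (AddMonoidAlgebra.coeffLinearEquiv R).surjective, Finsupp.lmapDomain_supported]

end CommSemiring

variable [CommRing R]

theorem mem_of_coeffsBySupport_eq_zero {n : ℕ} {K : Submodule R (MvPolynomial σ R)}
    (hK : ∀ d e : σ →₀ ℕ, d.degree = n → e.degree = n → d.support = e.support →
      monomial d 1 - monomial e 1 ∈ K)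
    {p : MvPolynomial σ R} (hp : p.IsHomogeneous n) (h0 : coeffsBySupport σ R p = 0) :
    p ∈ K := by
  let c := AddMonoidAlgebra.coeffLinearEquiv (M := σ →₀ ℕ) (S := R) R
  suffices c p ∈ K.comap c.symm.toLinearMap by simpa using this
  refine Finsupp.mem_of_mapDomain_eq_zero (s := {d | d.degree = n})
    (fun a ha b hb hab => ?_) ?_ h0
  · simpa [c, ← single_eq_monomial] using hK a b ha hb hab
  · rw [← mem_homogeneousSubmodule, homogeneousSubmodule_eq_finsupp_supported] at hp
    exact hp

variable (σ R) in
/-- Over `ZMod 2` the generators are the elements `Sq^1(t_i t_j)`. -/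
noncomputable def swapSpan : Submodule R (MvPolynomial σ R) :=
  Submodule.span R (Set.range fun ij : σ × σ => X ij.1 * X ij.2 ^ 2 - X ij.1 ^ 2 * X ij.2)

theorem swapSpan_le_ker_coeffsBySupport :
    swapSpan σ R ≤ LinearMap.ker (coeffsBySupport σ R) := by
  classical
  rw [swapSpan, Submodule.span_le]
  rintro _ ⟨⟨i, j⟩, rfl⟩
  have hsupp : (Finsupp.single i 1 + Finsupp.single j 2).support =
      (Finsupp.single i 2 + Finsupp.single j 1).support := by
    ext x
    simp only [Finsupp.mem_support_iff, Finsupp.add_apply, Finsupp.single_apply]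
    split_ifs <;> simp
  dsimp only
  rw [SetLike.mem_coe, LinearMap.mem_ker, X_pow_eq_monomial, X_pow_eq_monomial, X, X, monomial_mul,
    monomial_mul, map_sub, coeffsBySupport_monomial, coeffsBySupport_monomial, hsupp, sub_self]

theorem monomial_sub_monomial_mem_swapSpan {d e : σ →₀ ℕ}
    (hd : d.degree = 3) (he : e.degree = 3)
    (hde : d.support = e.support) : monomial d (1 : R) - monomial e 1 ∈ swapSpan σ R := by
  classical
  have hcard : d.support.card ≤ 3 := hd ▸ d.card_support_le_degree
  have hdS : ∑ x ∈ d.support, d x = 3 := hd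
  have heS : ∑ x ∈ d.support, e x = 3 := hde ▸ he
  have hd1 : ∀ x ∈ d.support, 1 ≤ d x := fun x hx => Finsupp.one_le_of_mem_support hx
  have he1 : ∀ x ∈ d.support, 1 ≤ e x := fun x hx =>
    Finsupp.one_le_of_mem_support (hde ▸ hx)
  rw [← prod_X_pow_eq_monomial, ← prod_X_pow_eq_monomial, ← hde]
  generalize d.support = S at *
  interval_cases hS : S.card
  · simp [Finset.card_eq_zero.mp hS] at hdS
  · obtain ⟨i, rfl⟩ := Finset.card_eq_one.mp hS
    simp only [Finset.sum_singleton] at hdS heS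
    simp [hdS, heS]
  · obtain ⟨i, j, hij, rfl⟩ := Finset.card_eq_two.mp hS
    simp only [Finset.sum_pair hij, Finset.prod_pair hij] at hdS heS ⊢
    have := hd1 i (by simp); have := hd1 j (by simp)
    have := he1 i (by simp); have := he1 j (by simp)
    rcases (by omega : d i = e i ∨ (d i = 1 ∧ e i = 2) ∨ (d i = 2 ∧ e i = 1)) with
      h | ⟨h1, h2⟩ | ⟨h1, h2⟩
    · rw [h, show d j = e j by omega, sub_self]
      exact zero_mem _
    · rw [h1, h2, show d j = 2 by omega, show e j = 1 by omega]
      exact Submodule.subset_span ⟨(i, j), by ring⟩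
    · rw [h1, h2, show d j = 1 by omega, show e j = 2 by omega]
      exact Submodule.subset_span ⟨(j, i), by ring⟩
  · obtain ⟨i, j, k, hij, hik, hjk, rfl⟩ := Finset.card_eq_three.mp hS
    have hall_one : ∀ f : σ → ℕ, (∀ x ∈ ({i, j, k} : Finset σ), 1 ≤ f x) →
        ∑ x ∈ {i, j, k}, f x = 3 → ∀ x ∈ ({i, j, k} : Finset σ), f x = 1 := by
      intro f h1 h3
      simp only [Finset.mem_insert, Finset.mem_singleton, forall_eq_or_imp, forall_eq] at h1 ⊢
      rw [Finset.sum_insert (by simp [hij, hik]), Finset.sum_pair hjk] at h3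
      omega
    rw [Finset.prod_congr rfl fun x hx => by
      rw [hall_one d hd1 hdS x hx, ← hall_one e he1 heS x hx], sub_self]
    exact zero_mem _

end MvPolynomial

section Steenrod

variable {h : ℕ}

theorem sqT_X (i : Fin h) : sqT h (X i) = X i + X i ^ 2 := by
  simp [sqT]

theorem homogeneousComponent_three_sqT_X (i : Fin h) :
    homogeneousComponent 3 (sqT h (X i)) = 0 := by
  rw [sqT_X, map_add, homogeneousComponent_of_mem (isHomogeneous_X _ i),
    homogeneousComponent_of_mem (isHomogeneous_X_pow i 2)]
  simp

theorem homogeneousComponent_three_sqT_X_mul_X (i j : Fin h) :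
    homogeneousComponent 3 (sqT h (X i * X j)) = X i * X j ^ 2 - X i ^ 2 * X j := by
  rw [map_mul, sqT_X, sqT_X, CharTwo.sub_eq_add,
    show (X i + X i ^ 2) * (X j + X j ^ 2) =
      X i * X j + (X i * X j ^ 2 + X i ^ 2 * X j) + X i ^ 2 * X j ^ 2 by ring,
    map_add, map_add, map_add,
    homogeneousComponent_of_mem ((isHomogeneous_X _ i).mul (isHomogeneous_X _ j)),
    homogeneousComponent_of_mem ((isHomogeneous_X _ i).mul (isHomogeneous_X_pow j 2)),
    homogeneousComponent_of_mem ((isHomogeneous_X_pow i 2).mul (isHomogeneous_X _ j)),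
    homogeneousComponent_of_mem ((isHomogeneous_X_pow i 2).mul (isHomogeneous_X_pow j 2))]
  simp

theorem homogeneousComponent_three_sqT_monomial_mem_swapSpan {d : Fin h →₀ ℕ}
    (hd : d.degree ≤ 2) :
    homogeneousComponent 3 (sqT h (monomial d 1)) ∈ swapSpan (Fin h) (ZMod 2) := by
  classical
  have hcard : d.support.card ≤ 2 := d.card_support_le_degree.trans hd
  have hdS : ∑ x ∈ d.support, d x ≤ 2 := hd
  have hd1 : ∀ x ∈ d.support, 1 ≤ d x := fun x hx => Finsupp.one_le_of_mem_support hx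
  have hXX : ∀ i j, homogeneousComponent 3 (sqT h (X i * X j)) ∈ swapSpan (Fin h) (ZMod 2) :=
    fun i j => homogeneousComponent_three_sqT_X_mul_X i j ▸
      Submodule.subset_span ⟨(i, j), rfl⟩
  rw [← prod_X_pow_eq_monomial]
  generalize d.support = S at *
  interval_cases hS : S.card
  · rw [Finset.card_eq_zero.mp hS, Finset.prod_empty, map_one,
      homogeneousComponent_of_mem (isHomogeneous_one _ _), if_neg (by norm_num)]
    exact zero_mem _
  · obtain ⟨i, rfl⟩ := Finset.card_eq_one.mp hS
    rw [Finset.sum_singleton] at hdS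
    have := hd1 i (by simp)
    rw [Finset.prod_singleton]
    rcases (by omega : d i = 1 ∨ d i = 2) with h1 | h2
    · rw [h1, pow_one, homogeneousComponent_three_sqT_X]
      exact zero_mem _
    · rw [h2, sq]
      exact hXX i i
  · obtain ⟨i, j, hij, rfl⟩ := Finset.card_eq_two.mp hS
    rw [Finset.sum_pair hij] at hdS
    have := hd1 i (by simp); have := hd1 j (by simp)
    rw [Finset.prod_pair hij, show d i = 1 by omega, show d j = 1 by omega, pow_one, pow_one]
    exact hXX i j

theorem hitSub_three_eq_swapSpan (h : ℕ) : hitSub h 3 = swapSpan (Fin h) (ZMod 2) := by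
  apply le_antisymm
  · rw [hitSub, Submodule.span_le]
    rintro _ ⟨k, f, hk1, -, hf, rfl⟩
    rw [f.as_sum, map_sum, map_sum]
    refine Submodule.sum_mem _ fun d hd => ?_
    rw [← mul_one (coeff d f), ← smul_eq_mul, ← smul_monomial, map_smul, map_smul]
    refine Submodule.smul_mem _ _ (homogeneousComponent_three_sqT_monomial_mem_swapSpan ?_)
    rw [Finsupp.degree_apply, ← hf.degree_eq_sum_deg_support hd]
    omega
  · rw [swapSpan, Submodule.span_le]
    rintro _ ⟨⟨i, j⟩, rfl⟩
    dsimp only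
    rw [SetLike.mem_coe, ← homogeneousComponent_three_sqT_X_mul_X]
    exact Submodule.subset_span
      ⟨1, X i * X j, le_rfl, by norm_num, (isHomogeneous_X _ i).mul (isHomogeneous_X _ j), rfl⟩

theorem mem_hitSub_three_iff {p : MvPolynomial (Fin h) (ZMod 2)} (hp : p.IsHomogeneous 3) :
    p ∈ hitSub h 3 ↔ coeffsBySupport (Fin h) (ZMod 2) p = 0 := by
  rw [hitSub_three_eq_swapSpan]
  exact ⟨fun hW => swapSpan_le_ker_coeffsBySupport hW,
    mem_of_coeffsBySupport_eq_zero (fun _ _ => monomial_sub_monomial_mem_swapSpan) hp⟩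

theorem finrank_QP_three (h : ℕ) :
    Module.finrank (ZMod 2) (QP h 3) =
      Nat.card {S : Finset (Fin h) // S.Nonempty ∧ S.card ≤ 3} := by
  let ψ :=
    coeffsBySupport (Fin h) (ZMod 2) ∘ₗ (homogeneousSubmodule (Fin h) (ZMod 2) 3).subtype
  have hker : LinearMap.ker ψ = (hitSub h 3).comap (homogeneousSubmodule _ _ 3).subtype := by
    ext ⟨p, hp⟩
    exact (mem_hitSub_three_iff hp).symm
  have hrange : LinearMap.range ψ =
      Finsupp.supported (ZMod 2) (ZMod 2) {S : Finset (Fin h) | S.Nonempty ∧ S.card ≤ 3} := by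
    rw [LinearMap.range_comp, Submodule.range_subtype, map_coeffsBySupport_homogeneousSubmodule,
      Finsupp.support_image_setOf_degree_eq three_pos]
  calc Module.finrank (ZMod 2) (QP h 3)
      = Module.finrank (ZMod 2) (LinearMap.range ψ) :=
        ((Submodule.quotEquivOfEq _ _ hker.symm).trans ψ.quotKerEquivRange).finrank_eq
    _ = Module.finrank (ZMod 2)
          ({S : Finset (Fin h) | S.Nonempty ∧ S.card ≤ 3} →₀ ZMod 2) :=
        ((LinearEquiv.ofEq _ _ hrange).trans (Finsupp.supportedEquivFinsupp _)).finrank_eq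
    _ = Nat.card {S : Finset (Fin h) // S.Nonempty ∧ S.card ≤ 3} := by
        rw [Module.finrank_finsupp_self, Nat.card_eq_fintype_card]
        rfl

end Steenrod

/-- The cohit space `QP_3^{⊗6}` has dimension 41 over `F2`. -/
theorem dim_QP_6_3 : Module.finrank (ZMod 2) (QP 6 3) = 41 := by
  rw [finrank_QP_three, Nat.card_eq_fintype_card]
  rfl
end

section
/- In F2[t_1, ..., t_h] with the Steenrod algebra action, no spike monomial is hit: for any exponents of the form 2^{β_1} − 1, ..., 2^{β_h} − 1 (β_j ≥ 0, not all zero), the monomial Π_j t_j^{2^{β_j} − 1} does not lie in the hit subspace of its degree. -/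
open MvPolynomial

/-- Key binomial fact mod 2: if `a + i = 2^β − 1` and `i ≠ 0`, then `C(a,i)` is even. -/
lemma keyChoose : ∀ β a i : ℕ, a + i = 2 ^ β - 1 → i ≠ 0 → a.choose i % 2 = 0 := by
  intro β
  induction β with
  | zero => intro a i hai hi; omega
  | succ β ih =>
    intro a i hai hi
    have hmod : a.choose i % 2 = (a % 2).choose (i % 2) * ((a / 2).choose (i / 2)) % 2 :=
      Choose.choose_modEq_choose_mod_mul_choose_div_nat (p := 2)
    have hpow : 2 ^ (β + 1) - 1 = 2 * (2 ^ β - 1) + 1 := by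
      have : 1 ≤ 2 ^ β := Nat.one_le_two_pow
      rw [pow_succ]; omega
    rcases Nat.even_or_odd i with he | ho
    · -- i even, a odd
      have hi2 : i % 2 = 0 := Nat.even_iff.mp he
      have ha2 : a % 2 = 1 := by omega
      have hsum : (a / 2) + (i / 2) = 2 ^ β - 1 := by omega
      have h2 : i / 2 ≠ 0 := by omega
      have := ih (a / 2) (i / 2) hsum h2
      rw [hmod, ha2, hi2, Nat.choose_zero_right, one_mul]
      omega
    · -- i odd, a even
      have hi2 : i % 2 = 1 := Nat.odd_iff.mp ho
      have ha2 : a % 2 = 0 := by omega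
      rw [hmod, ha2, hi2]
      simp

/-- The coefficient of a monomial in `∏_{j ∈ s} (1 + X_j)^{d_j}` is the corresponding
product of binomial coefficients (and `0` if the exponent involves variables outside `s`). -/
lemma coeff_prod_one_add_X {R : Type*} [CommRing R] {ι : Type*} [DecidableEq ι]
    (s : Finset ι) (d : ι → ℕ) (e : ι →₀ ℕ) :
    MvPolynomial.coeff e (∏ j ∈ s, (1 + X j : MvPolynomial ι R) ^ d j) =
      if e.support ⊆ s then ∏ j ∈ s, ((d j).choose (e j) : R) else 0 := by
  induction s using Finset.cons_induction generalizing e with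
  | empty =>
    simp only [Finset.prod_empty, MvPolynomial.coeff_one, Finset.subset_empty,
      Finsupp.support_eq_empty]
    by_cases h : e = 0 <;> simp [h, eq_comm]
  | cons a s ha ih =>
    rw [Finset.prod_cons]
    have hexp : ((1 : MvPolynomial ι R) + X a) ^ d a =
        ∑ k ∈ Finset.range (d a + 1), C (((d a).choose k : R)) * X a ^ k := by
      rw [add_comm (1 : MvPolynomial ι R) (X a), add_pow]
      apply Finset.sum_congr rfl
      intro k _
      rw [one_pow, C_eq_coe_nat]
      ring
    rw [hexp, Finset.sum_mul, MvPolynomial.coeff_sum]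
    have hterm : ∀ k, MvPolynomial.coeff e
        (C (((d a).choose k : R)) * X a ^ k * (∏ j ∈ s, (1 + X j : MvPolynomial ι R) ^ d j))
        = ((d a).choose k : R) * (if Finsupp.single a k ≤ e then
            (if (e - Finsupp.single a k).support ⊆ s then
              ∏ j ∈ s, ((d j).choose ((e - Finsupp.single a k) j) : R) else 0) else 0) := by
      intro k
      rw [mul_assoc, MvPolynomial.coeff_C_mul,
        MvPolynomial.X_pow_eq_monomial, MvPolynomial.coeff_monomial_mul', ih]
      split_ifs <;> simp
    simp only [hterm]; clear hterm hexp ih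
    by_cases hsub : e.support ⊆ Finset.cons a s ha
    · rw [if_pos hsub, Finset.prod_cons]
      rw [Finset.sum_eq_single (e a)]
      · -- the k = e a term
        have h1 : Finsupp.single a (e a) ≤ e := by
          intro j
          rcases eq_or_ne a j with hj | hj
          · subst hj; simp [Finsupp.single_apply]
          · simp [Finsupp.single_apply, hj]
        rw [if_pos h1]
        have h2 : (e - Finsupp.single a (e a)).support ⊆ s := by
          intro j hj
          simp only [Finsupp.mem_support_iff, Finsupp.tsub_apply, Finsupp.single_apply] at hj
          by_cases hja : j = a
          · subst hja; simp at hj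
          · have : j ∈ e.support := by
              simp only [Finsupp.mem_support_iff]; intro h0; apply hj; simp [h0]
            have := hsub this
            rw [Finset.mem_cons] at this
            tauto
        rw [if_pos h2]
        congr 1
        apply Finset.prod_congr rfl
        intro j hj
        have hja : j ≠ a := fun h => ha (h ▸ hj)
        simp [Finsupp.single_apply, hja.symm]
      · -- other k in range give 0
        intro k hk hne
        rw [Finset.mem_range] at hk
        by_cases h1 : Finsupp.single a k ≤ e
        · have hka : k ≤ e a := by simpa using h1 a
          have hklt : k < e a := lt_of_le_of_ne hka hne
          have : ¬ (e - Finsupp.single a k).support ⊆ s := by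
            intro hss
            have : a ∈ (e - Finsupp.single a k).support := by
              simp only [Finsupp.mem_support_iff, Finsupp.tsub_apply, Finsupp.single_apply]
              simp; omega
            exact ha (hss this)
          rw [if_pos h1, if_neg this, mul_zero]
        · rw [if_neg h1, mul_zero]
      · -- e a not in range
        intro h
        rw [Finset.mem_range, not_lt] at h
        have : (d a).choose (e a) = 0 := Nat.choose_eq_zero_of_lt (by omega)
        rw [this]; push_cast; ring
    · rw [if_neg hsub]
      apply Finset.sum_eq_zero
      intro k _
      obtain ⟨b, hb1, hb2⟩ : ∃ b ∈ e.support, b ∉ Finset.cons a s ha := by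
        by_contra hc; push_neg at hc; exact hsub hc
      rw [Finset.mem_cons] at hb2; push_neg at hb2
      by_cases h1 : Finsupp.single a k ≤ e
      · have : ¬ (e - Finsupp.single a k).support ⊆ s := by
          intro hss
          have : b ∈ (e - Finsupp.single a k).support := by
            simp only [Finsupp.mem_support_iff, Finsupp.tsub_apply, Finsupp.single_apply,
              if_neg (Ne.symm hb2.1)]
            simpa using hb1
          exact hb2.2 (hss this)
        rw [if_pos h1, if_neg this, mul_zero]
      · rw [if_neg h1, mul_zero]

lemma degree_eq_sum_univ {ι : Type*} [Fintype ι] [DecidableEq ι] (e : ι →₀ ℕ) :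
    e.degree = ∑ j, e j := by
  rw [Finsupp.degree]
  exact Finset.sum_subset (Finset.subset_univ _)
    (fun j _ hj => Finsupp.notMem_support_iff.mp hj)

/-- The spike coefficient of any generator of the hit subspace vanishes. -/
lemma coeff_spike_sqT_monomial (h : ℕ) (β : Fin h → ℕ)
    (d₀ : Fin h →₀ ℕ) (hd₀ : ∀ j, d₀ j = 2 ^ β j - 1)
    (d : Fin h →₀ ℕ) (c : ZMod 2) (hlt : ∑ j, d j < ∑ j, d₀ j) :
    MvPolynomial.coeff d₀ (sqT h (monomial d c)) = 0 := by
  classical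
  have hfac : sqT h (monomial d c) =
      C c * (monomial d (1 : ZMod 2) * ∏ j, (1 + X j : MvPolynomial (Fin h) (ZMod 2)) ^ d j) := by
    rw [sqT, aeval_monomial]
    have h1 : (Finsupp.prod d fun i k => (X i + X i ^ 2 : MvPolynomial (Fin h) (ZMod 2)) ^ k)
        = ∏ j, (X j + X j ^ 2 : MvPolynomial (Fin h) (ZMod 2)) ^ d j := by
      rw [Finsupp.prod]
      exact Finset.prod_subset (Finset.subset_univ _)
        (fun j _ hj => by rw [Finsupp.notMem_support_iff.mp hj, pow_zero])
    rw [h1]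
    have h2 : ∀ j : Fin h, (X j + X j ^ 2 : MvPolynomial (Fin h) (ZMod 2)) ^ d j
        = X j ^ d j * (1 + X j) ^ d j := by
      intro j
      rw [← mul_pow]; ring_nf
    have h3 : (∏ j, (X j + X j ^ 2 : MvPolynomial (Fin h) (ZMod 2)) ^ d j)
        = (∏ j, (X j : MvPolynomial (Fin h) (ZMod 2)) ^ d j) *
          ∏ j, (1 + X j : MvPolynomial (Fin h) (ZMod 2)) ^ d j := by
      rw [← Finset.prod_mul_distrib]
      exact Finset.prod_congr rfl fun j _ => h2 j
    have h4 : (∏ j, (X j : MvPolynomial (Fin h) (ZMod 2)) ^ d j)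
        = monomial d (1 : ZMod 2) := by
      rw [← prod_X_pow_eq_monomial]
      exact (Finset.prod_subset (Finset.subset_univ _)
        (fun j _ hj => by rw [Finsupp.notMem_support_iff.mp hj, pow_zero])).symm
    rw [h3, h4, MvPolynomial.algebraMap_eq]
  rw [hfac, MvPolynomial.coeff_C_mul, MvPolynomial.coeff_monomial_mul']
  by_cases hle : d ≤ d₀
  · rw [if_pos hle, one_mul, coeff_prod_one_add_X,
      if_pos (Finset.subset_univ _)]
    -- find an index where d j < d₀ j
    obtain ⟨j₀, hj₀⟩ : ∃ j₀, d j₀ < d₀ j₀ := by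
      by_contra hc
      push_neg at hc
      have : ∀ j, d j = d₀ j := fun j => le_antisymm (hle j) (hc j)
      have : ∑ j, d j = ∑ j, d₀ j := Finset.sum_congr rfl fun j _ => this j
      omega
    have hkey : ((d j₀).choose ((d₀ - d) j₀) : ZMod 2) = 0 := by
      have h5 : (d₀ - d) j₀ = d₀ j₀ - d j₀ := Finsupp.tsub_apply d₀ d j₀
      have h6 : d j₀ + (d₀ j₀ - d j₀) = 2 ^ β j₀ - 1 := by
        rw [← hd₀ j₀]; omega
      have h7 := keyChoose (β j₀) (d j₀) (d₀ j₀ - d j₀) h6 (by omega)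
      rw [h5]
      exact (ZMod.natCast_eq_zero_iff _ 2).mpr (Nat.dvd_of_mod_eq_zero h7)
    rw [Finset.prod_eq_zero (Finset.mem_univ j₀) hkey, mul_zero]
  · rw [if_neg hle, mul_zero]

/-- No spike monomial is hit: for exponents `2^{β_j} − 1` (not all `β_j` zero), the monomial
`∏_j t_j^{2^{β_j} − 1}` does not lie in the hit subspace of its degree. -/
theorem spike_not_hit (h : ℕ) (β : Fin h → ℕ) (hβ : ∃ j, β j ≠ 0) :
    (∏ j, (X j : MvPolynomial (Fin h) (ZMod 2)) ^ (2 ^ β j - 1)) ∉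
      hitSub h (∑ j, (2 ^ β j - 1)) := by
  classical
  set n := ∑ j, (2 ^ β j - 1) with hn
  set d₀ : Fin h →₀ ℕ := Finsupp.equivFunOnFinite.symm fun j => 2 ^ β j - 1 with hd₀def
  have hd₀ : ∀ j, d₀ j = 2 ^ β j - 1 := fun j => rfl
  have hdeg : d₀.degree = n := by
    rw [degree_eq_sum_univ, hn]
    exact Finset.sum_congr rfl fun j _ => hd₀ j
  -- the spike coefficient vanishes on the hit subspace
  have hz : ∀ g ∈ hitSub h n, MvPolynomial.coeff d₀ g = 0 := by
    intro g hg
    refine Submodule.span_induction ?_ ?_ ?_ ?_ hg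
    · rintro g ⟨k, f, hk1, hkn, hf, rfl⟩
      rw [coeff_homogeneousComponent, if_pos hdeg]
      -- expand f as a sum of monomials
      conv_lhs => rw [MvPolynomial.as_sum f]
      rw [map_sum, MvPolynomial.coeff_sum]
      apply Finset.sum_eq_zero
      intro d hd
      apply coeff_spike_sqT_monomial h β d₀ hd₀
      have hdd : d.degree = n - k := by
        rw [Finsupp.degree_eq_weight_one]
        exact hf (MvPolynomial.mem_support_iff.mp hd)
      have h1 : ∑ j, d j = n - k := by rw [← degree_eq_sum_univ, hdd]
      have h2 : ∑ j, d₀ j = n := by rw [← degree_eq_sum_univ, hdeg]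
      omega
    · simp
    · intro x y _ _ hx hy
      rw [MvPolynomial.coeff_add, hx, hy, add_zero]
    · intro a x _ hx
      rw [MvPolynomial.coeff_smul, hx, smul_zero]
  intro hmem
  have h1 := hz _ hmem
  have hspike : (∏ j, (X j : MvPolynomial (Fin h) (ZMod 2)) ^ (2 ^ β j - 1))
      = monomial d₀ (1 : ZMod 2) := by
    have e1 : (∏ j, (X j : MvPolynomial (Fin h) (ZMod 2)) ^ (2 ^ β j - 1))
        = ∏ j, (X j : MvPolynomial (Fin h) (ZMod 2)) ^ d₀ j :=
      Finset.prod_congr rfl fun j _ => by rw [hd₀ j]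
    rw [e1, ← prod_X_pow_eq_monomial]
    exact (Finset.prod_subset (Finset.subset_univ _)
      (fun j _ hj => by rw [Finsupp.notMem_support_iff.mp hj, pow_zero])).symm
  rw [hspike, MvPolynomial.coeff_monomial, if_pos rfl] at h1
  exact one_ne_zero h1
end

section
/- The GL_6(F2)-invariant subspace of the cohit space QP_2^{⊗6} = (degree-2 component of F2[t_1,...,t_6]) / (hit elements) is zero. -/
open MvPolynomial

/-! ### Auxiliary material -/

abbrev P6 := MvPolynomial (Fin 6) (ZMod 2)

noncomputable abbrev E (a : Fin 6) : Fin 6 →₀ ℕ := Finsupp.single a 1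

noncomputable def sqSpan : Submodule (ZMod 2) P6 :=
  Submodule.span (ZMod 2) (Set.range fun j : Fin 6 => (X j : P6) ^ 2)

lemma weight_one_eq (d : Fin 6 →₀ ℕ) : (Finsupp.weight 1) d = d.sum fun _ e => e := by
  simp [Finsupp.weight_apply, Finsupp.sum]

lemma sum_eq_one' {d : Fin 6 →₀ ℕ} (h : d.sum (fun _ e => e) = 1) :
    ∃ a, d = Finsupp.single a 1 := by
  have hc : Multiset.card (Finsupp.toMultiset d) = 1 := by
    rw [Finsupp.card_toMultiset]; exact h
  obtain ⟨a, ha⟩ := Multiset.card_eq_one.mp hc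
  refine ⟨a, ?_⟩
  have := congrArg Multiset.toFinsupp ha
  rwa [Finsupp.toMultiset_toFinsupp, Multiset.toFinsupp_singleton] at this

lemma sum_eq_two' {d : Fin 6 →₀ ℕ} (h : d.sum (fun _ e => e) = 2) :
    ∃ a b : Fin 6, d = E a + E b := by
  have hc : Multiset.card (Finsupp.toMultiset d) = 2 := by
    rw [Finsupp.card_toMultiset]; exact h
  obtain ⟨a, b, hab⟩ := Multiset.card_eq_two.mp hc
  refine ⟨a, b, ?_⟩
  have := congrArg Multiset.toFinsupp hab
  rw [Finsupp.toMultiset_toFinsupp] at this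
  rw [this]
  show Multiset.toFinsupp (a ::ₘ {b}) = _
  rw [← Multiset.singleton_add, Multiset.toFinsupp_add, Multiset.toFinsupp_singleton,
    Multiset.toFinsupp_singleton]

lemma sum_eq_zero' {d : Fin 6 →₀ ℕ} (h : d.sum (fun _ e => e) = 0) : d = 0 := by
  have hc : Multiset.card (Finsupp.toMultiset d) = 0 := by
    rw [Finsupp.card_toMultiset]; exact h
  have := congrArg Multiset.toFinsupp (Multiset.card_eq_zero.mp hc)
  rwa [Finsupp.toMultiset_toFinsupp] at this

lemma homcomp_sqX (a : Fin 6) :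
    homogeneousComponent 2 (sqT 6 (X a)) = (X a : P6) ^ 2 := by
  rw [sqT, aeval_X, map_add,
    homogeneousComponent_of_mem ((mem_homogeneousSubmodule 1 (X a)).mpr (isHomogeneous_X _ a)),
    homogeneousComponent_of_mem
      ((mem_homogeneousSubmodule 2 _).mpr (isHomogeneous_X_pow a 2)),
    if_neg (by norm_num), if_pos rfl, zero_add]

lemma mono1_mem (a : Fin 6) (c : ZMod 2) :
    homogeneousComponent 2 (sqT 6 (monomial (Finsupp.single a 1) c)) ∈ sqSpan := by
  have h1 : (monomial (Finsupp.single a 1) c : P6) = c • X a := by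
    rw [smul_eq_C_mul, C_mul_X_eq_monomial]
  rw [h1, map_smul, map_smul, homcomp_sqX]
  exact Submodule.smul_mem _ _ (Submodule.subset_span ⟨a, rfl⟩)

lemma hitSub_eq : hitSub 6 2 = sqSpan := by
  apply le_antisymm
  · rw [hitSub, Submodule.span_le]
    rintro g ⟨k, f, hk1, hk2, hf, rfl⟩
    rw [← support_sum_monomial_coeff f, map_sum, map_sum]
    apply Submodule.sum_mem
    intro d hd
    have hdeg : d.sum (fun _ e => e) = 2 - k := by
      rw [← weight_one_eq]; exact hf (mem_support_iff.mp hd)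
    interval_cases k
    · obtain ⟨a, rfl⟩ := sum_eq_one' hdeg
      exact mono1_mem a _
    · have h0 : d = 0 := sum_eq_zero' hdeg
      subst h0
      rw [monomial_zero', show (C (coeff 0 f) : P6)
          = algebraMap (ZMod 2) P6 (coeff 0 f) from rfl,
        AlgHom.commutes, MvPolynomial.algebraMap_eq,
        homogeneousComponent_of_mem ((mem_homogeneousSubmodule 0 _).mpr (isHomogeneous_C _ _)),
        if_neg (by norm_num)]
      exact Submodule.zero_mem _
  · rw [sqSpan, Submodule.span_le]
    rintro g ⟨j, rfl⟩
    exact Submodule.subset_span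
      ⟨1, X j, le_refl 1, by norm_num, isHomogeneous_X _ j, (homcomp_sqX j).symm⟩

lemma coeff_sqSpan {m : Fin 6 →₀ ℕ} (hm : ∀ a, Finsupp.single a 2 ≠ m)
    {g : P6} (hg : g ∈ sqSpan) : coeff m g = 0 := by
  induction hg using Submodule.span_induction with
  | mem x hx =>
    obtain ⟨j, rfl⟩ := hx; dsimp only; rw [X_pow_eq_monomial, coeff_monomial, if_neg (hm j)]
  | zero => simp
  | add x y _ _ hx hy => rw [coeff_add, hx, hy, add_zero]
  | smul c x _ hx => rw [coeff_smul, hx, smul_zero]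

lemma subst_transvection (i b : Fin 6) :
    (fun k : Fin 6 => ∑ l, C ((Matrix.transvection i b (1 : ZMod 2)) k l) * X l)
      = fun k => if k = i then X i + X b else (X k : P6) := by
  funext k
  by_cases hk : k = i
  · subst hk
    simp [Matrix.transvection, Matrix.single, Matrix.one_apply, apply_ite C,
      ite_and, add_mul, ite_mul, Finset.sum_add_distrib, Finset.sum_ite_eq, add_comm]
  · simp [Matrix.transvection, Matrix.single, Matrix.one_apply, apply_ite C,
      ite_and, add_mul, ite_mul, Finset.sum_add_distrib, Finset.sum_ite_eq, hk]
    exact fun h => hk h.symm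

noncomputable def tvGL (i b : Fin 6) (h : i ≠ b) : GL (Fin 6) (ZMod 2) :=
  ⟨Matrix.transvection i b 1, Matrix.transvection i b 1,
    by rw [Matrix.transvection_mul_transvection_same (R := ZMod 2) (i := i) (j := b) h 1 1,
      show (1 : ZMod 2) + 1 = 0 by decide, Matrix.transvection_zero],
    by rw [Matrix.transvection_mul_transvection_same (R := ZMod 2) (i := i) (j := b) h 1 1,
      show (1 : ZMod 2) + 1 = 0 by decide, Matrix.transvection_zero]⟩

lemma tvGL_coe (i b : Fin 6) (h : i ≠ b) :
    ((tvGL i b h : GL (Fin 6) (ZMod 2)) : Matrix (Fin 6) (Fin 6) (ZMod 2))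
      = Matrix.transvection i b 1 := rfl

lemma XX_eq (u v : Fin 6) : (X u * X v : P6) = monomial (E u + E v) 1 := by
  rw [monomial_single_add, pow_one, show (monomial (E v)) (1 : ZMod 2) = X v from rfl]

lemma coeff_XX (m : Fin 6 →₀ ℕ) (u v : Fin 6) :
    coeff m (X u * X v : P6) = if E u + E v = m then 1 else 0 := by
  rw [XX_eq, coeff_monomial]

lemma EE_apply (u v x : Fin 6) :
    (E u + E v) x = (if u = x then 1 else 0) + (if v = x then 1 else 0) := by
  simp [Finsupp.single_apply]

lemma EE_ne {u v w z x : Fin 6}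
    (h : ((if u = x then 1 else 0) + (if v = x then 1 else 0) : ℕ)
      ≠ (if w = x then 1 else 0) + (if z = x then 1 else 0)) :
    E u + E v ≠ E w + E z :=
  fun he => h (by rw [← EE_apply, ← EE_apply, he])

lemma EE_cancel_left {u a c : Fin 6} : E u + E a = E u + E c ↔ a = c := by
  constructor
  · intro h
    exact Finsupp.single_left_injective one_ne_zero (add_left_cancel h)
  · rintro rfl; rfl

lemma EE_cancel_right {u a c : Fin 6} : E a + E u = E c + E u ↔ a = c := by
  constructor
  · intro h
    exact Finsupp.single_left_injective one_ne_zero (add_right_cancel h)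
  · rintro rfl; rfl

lemma coeff_A_mono {i j b : Fin 6} (hij : i ≠ j) (hbi : b ≠ i) (hbj : b ≠ j)
    (a a' : Fin 6) (c : ZMod 2) :
    coeff (E b + E j)
      (aeval (fun k => if k = i then X i + X b else (X k : P6)) (monomial (E a + E a') c))
    = (if E a + E a' = E b + E j then c else 0)
      + (if E a + E a' = E i + E j then c else 0) := by
  have hji : ¬ j = i := fun h => hij h.symm
  have hm : (monomial (E a + E a') c : P6) = C c * (X a * X a') := by
    rw [XX_eq, C_mul_monomial, mul_one]
  rw [hm, map_mul, map_mul, aeval_C, aeval_X, aeval_X,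
    show (algebraMap (ZMod 2) P6) c = C c from rfl, coeff_C_mul]
  by_cases ha : a = i <;> by_cases ha' : a' = i
  · rw [ha, ha']
    have h1 : (E i + E i = E b + E j) = False :=
      eq_false (EE_ne (x := j) (by simp [hij, hbj]))
    have h2 : (E i + E b = E b + E j) = False :=
      eq_false (EE_ne (x := i) (by simp [hbi, hji]))
    have h3 : (E b + E i = E b + E j) = False :=
      eq_false (EE_ne (x := i) (by simp [hbi, hji]))
    have h4 : (E b + E b = E b + E j) = False :=
      eq_false (EE_ne (x := j) (by simp [hbj, hij]))
    have h5 : (E i + E i = E i + E j) = False :=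
      eq_false (EE_ne (x := j) (by simp [hij]))
    rw [if_pos rfl, add_mul, mul_add, mul_add, coeff_add, coeff_add, coeff_add,
      coeff_XX, coeff_XX, coeff_XX, coeff_XX]
    simp only [h1, h2, h3, h4, h5, if_false]
    ring
  · rw [ha]
    have h1 : (E i + E a' = E b + E j) = False :=
      eq_false (EE_ne (x := i) (by simp [ha', hbi, hji]))
    have h2 : (E b + E a' = E b + E j) ↔ (a' = j) := EE_cancel_left
    have h3 : (E i + E a' = E i + E j) ↔ (a' = j) := EE_cancel_left
    rw [if_pos rfl, if_neg ha', add_mul, coeff_add, coeff_XX, coeff_XX]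
    simp only [h1, h2, h3, if_false]
    split_ifs <;> ring
  · rw [ha']
    have h1 : (E a + E i = E b + E j) = False :=
      eq_false (EE_ne (x := i) (by simp [ha, hbi, hji]))
    have h2 : (E a + E b = E b + E j) ↔ (a = j) := by
      rw [add_comm (E b) (E j)]; exact EE_cancel_right
    have h3 : (E a + E i = E i + E j) ↔ (a = j) := by
      rw [add_comm (E a) (E i)]; exact EE_cancel_left
    rw [if_neg ha, if_pos rfl, mul_add, coeff_add, coeff_XX, coeff_XX]
    simp only [h1, h2, h3, if_false]
    split_ifs <;> ring
  · have h1 : (E a + E a' = E i + E j) = False :=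
      eq_false (EE_ne (x := i) (by simp [ha, ha', hji]))
    rw [if_neg ha, if_neg ha', coeff_XX]
    simp only [h1, if_false, add_zero]
    split_ifs <;> ring

lemma coeff_eq_zero_of_inv (p : P6) (hp : p.IsHomogeneous 2)
    (hinv : ∀ M : GL (Fin 6) (ZMod 2),
      aeval (fun i => ∑ j, C ((M : Matrix (Fin 6) (Fin 6) (ZMod 2)) i j) * X j) p - p ∈
        hitSub 6 2)
    {i j b : Fin 6} (hij : i ≠ j) (hbi : b ≠ i) (hbj : b ≠ j) :
    coeff (E i + E j) p = 0 := by
  have hmem := hinv (tvGL i b (Ne.symm hbi))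
  rw [tvGL_coe, subst_transvection, hitSub_eq] at hmem
  have hmne : ∀ a : Fin 6, Finsupp.single a 2 ≠ E b + E j := by
    intro a h
    have h2 := DFunLike.congr_fun h j
    rw [EE_apply] at h2
    simp [Finsupp.single_apply, hbj] at h2
    split_ifs at h2 <;> omega
  have h0 := coeff_sqSpan hmne hmem
  rw [coeff_sub] at h0
  have hA : coeff (E b + E j) (aeval (fun k => if k = i then X i + X b else (X k : P6)) p)
      = coeff (E b + E j) p + coeff (E i + E j) p := by
    conv_lhs => rw [← support_sum_monomial_coeff p]
    rw [map_sum, MvPolynomial.coeff_sum]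
    have hterm : ∀ d ∈ p.support,
        coeff (E b + E j)
          (aeval (fun k => if k = i then X i + X b else (X k : P6)) (monomial d (coeff d p)))
        = (if d = E b + E j then coeff d p else 0)
          + (if d = E i + E j then coeff d p else 0) := by
      intro d hd
      have hdeg : d.sum (fun _ e => e) = 2 := by
        rw [← weight_one_eq]; exact hp (mem_support_iff.mp hd)
      obtain ⟨u, v, rfl⟩ := sum_eq_two' hdeg
      exact coeff_A_mono hij hbi hbj u v _
    rw [Finset.sum_congr rfl hterm, Finset.sum_add_distrib,
      Finset.sum_ite_eq' p.support (E b + E j) (fun d => coeff d p),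
      Finset.sum_ite_eq' p.support (E i + E j) (fun d => coeff d p)]
    by_cases hb1 : E b + E j ∈ p.support <;> by_cases hb2 : E i + E j ∈ p.support <;>
      simp [hb1, hb2, notMem_support_iff.mp, MvPolynomial.notMem_support_iff]
  rw [hA] at h0
  linear_combination h0

/-- The `GL_6(F2)`-invariant subspace of `QP_2^{⊗6}` is zero: any homogeneous degree-2
polynomial whose class is fixed by every invertible linear substitution of the variables
is itself hit. -/
theorem QP_6_2_GL6_invariants_zero (p : MvPolynomial (Fin 6) (ZMod 2))
    (hp : p.IsHomogeneous 2)
    (hinv : ∀ M : GL (Fin 6) (ZMod 2),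
      aeval (fun i => ∑ j, C ((M : Matrix (Fin 6) (Fin 6) (ZMod 2)) i j) * X j) p - p ∈
        hitSub 6 2) :
    p ∈ hitSub 6 2 := by
  rw [hitSub_eq]
  rw [← support_sum_monomial_coeff p]
  apply Submodule.sum_mem
  intro d hd
  have hdeg : d.sum (fun _ e => e) = 2 := by
    rw [← weight_one_eq]; exact hp (mem_support_iff.mp hd)
  obtain ⟨a, a', rfl⟩ := sum_eq_two' hdeg
  by_cases haa : a = a'
  · subst haa
    have h1 : E a + E a = Finsupp.single a 2 := by
      rw [← Finsupp.single_add]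
    rw [h1]
    have h2 : (monomial (Finsupp.single a 2)) (coeff (Finsupp.single a 2) p)
        = coeff (Finsupp.single a 2) p • (X a : P6) ^ 2 := by
      rw [X_pow_eq_monomial, smul_eq_C_mul, C_mul_monomial, mul_one]
    rw [h2]
    exact Submodule.smul_mem _ _ (Submodule.subset_span ⟨a, rfl⟩)
  · obtain ⟨b, hb1, hb2⟩ : ∃ b : Fin 6, b ≠ a ∧ b ≠ a' := by
      have : ∀ a a' : Fin 6, ∃ b, b ≠ a ∧ b ≠ a' := by decide
      exact this a a'
    rw [coeff_eq_zero_of_inv p hp hinv haa hb1 hb2, monomial_zero]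
    exact Submodule.zero_mem _
end

section
/- In F2[t_1, ..., t_6] with the Steenrod algebra action, the monomial t_1 t_2^2 t_3^5 t_4^2 t_5^2 t_6 of degree 13 is congruent, modulo hit elements plus polynomials of strictly smaller weight vector, to the sum of the eight monomials t_1t_2^2t_3^3t_4t_5^2t_6^4, t_1t_2^2t_3^3t_4t_5^4t_6^2, t_1t_2^2t_3^3t_4^2t_5t_6^4, t_1t_2^2t_3^3t_4^2t_5^4t_6, t_1t_2^2t_3^3t_4^4t_5t_6^2, t_1t_2^2t_3^3t_4^4t_5^2t_6, t_1t_2^2t_3^5t_4t_5^2t_6^2, t_1t_2^2t_3^5t_4^2t_5t_6^2, each of which is strictly smaller than it in the order below; hence t_1 t_2^2 t_3^5 t_4^2 t_5^2 t_6 is inadmissible. -/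
open MvPolynomial

/-- The monomial `∏_j t_j^{a_j}` attached to an exponent vector `a`. -/
noncomputable def mon6 (a : Fin 6 → ℕ) : MvPolynomial (Fin 6) (ZMod 2) := ∏ j, X j ^ a j

/-- Weight vector of an exponent vector: `ω_{i+1}(a) = ∑_j α_i(a_j)` (binary digits). -/
def wvec (a : Fin 6 → ℕ) (i : ℕ) : ℕ := ∑ j, ((a j).testBit i).toNat

/-- Left-lexicographic strict order on ℕ-indexed sequences. -/
def lexLtN (u v : ℕ → ℕ) : Prop := ∃ i, (∀ k, k < i → u k = v k) ∧ u i < v i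

/-- Left-lexicographic strict order on exponent vectors. -/
def lexLtE (a b : Fin 6 → ℕ) : Prop := ∃ i : Fin 6, (∀ k, k < i → a k = b k) ∧ a i < b i

/-- The weight vector `(3,3,1,0,0,…)`. -/
def w331 : ℕ → ℕ := fun i => if i = 0 then 3 else if i = 1 then 3 else if i = 2 then 1 else 0

/-- Span of the degree-13 monomials of weight vector strictly smaller than `(3,3,1)`. -/
noncomputable def smallerW : Submodule (ZMod 2) (MvPolynomial (Fin 6) (ZMod 2)) :=
  Submodule.span (ZMod 2)
    {g | ∃ a : Fin 6 → ℕ, (∑ j, a j) = 13 ∧ lexLtN (wvec a) w331 ∧ g = mon6 a}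

/-- Exponent vector of `t_1 t_2^2 t_3^5 t_4^2 t_5^2 t_6`. -/
def tvec : Fin 6 → ℕ := ![1, 2, 5, 2, 2, 1]

/-- The eight exponent vectors of the correcting monomials. -/
def vs : Fin 8 → Fin 6 → ℕ :=
  ![![1, 2, 3, 1, 2, 4], ![1, 2, 3, 1, 4, 2], ![1, 2, 3, 2, 1, 4], ![1, 2, 3, 2, 4, 1],
    ![1, 2, 3, 4, 1, 2], ![1, 2, 3, 4, 2, 1], ![1, 2, 5, 1, 2, 2], ![1, 2, 5, 2, 1, 2]]


abbrev R6 := MvPolynomial (Fin 6) (ZMod 2)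

section veclemmas
variable {α : Type*} (x0 x1 x2 x3 x4 x5 x6 x7 : α)
lemma c6_0 : (![x0,x1,x2,x3,x4,x5] : Fin 6 → α) 0 = x0 := rfl
lemma c6_1 : (![x0,x1,x2,x3,x4,x5] : Fin 6 → α) 1 = x1 := rfl
lemma c6_2 : (![x0,x1,x2,x3,x4,x5] : Fin 6 → α) 2 = x2 := rfl
lemma c6_3 : (![x0,x1,x2,x3,x4,x5] : Fin 6 → α) 3 = x3 := rfl
lemma c6_4 : (![x0,x1,x2,x3,x4,x5] : Fin 6 → α) 4 = x4 := rfl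
lemma c6_5 : (![x0,x1,x2,x3,x4,x5] : Fin 6 → α) 5 = x5 := rfl
lemma c8_0 : (![x0,x1,x2,x3,x4,x5,x6,x7] : Fin 8 → α) 0 = x0 := rfl
lemma c8_1 : (![x0,x1,x2,x3,x4,x5,x6,x7] : Fin 8 → α) 1 = x1 := rfl
lemma c8_2 : (![x0,x1,x2,x3,x4,x5,x6,x7] : Fin 8 → α) 2 = x2 := rfl
lemma c8_3 : (![x0,x1,x2,x3,x4,x5,x6,x7] : Fin 8 → α) 3 = x3 := rfl
lemma c8_4 : (![x0,x1,x2,x3,x4,x5,x6,x7] : Fin 8 → α) 4 = x4 := rfl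
lemma c8_5 : (![x0,x1,x2,x3,x4,x5,x6,x7] : Fin 8 → α) 5 = x5 := rfl
lemma c8_6 : (![x0,x1,x2,x3,x4,x5,x6,x7] : Fin 8 → α) 6 = x6 := rfl
lemma c8_7 : (![x0,x1,x2,x3,x4,x5,x6,x7] : Fin 8 → α) 7 = x7 := rfl
end veclemmas

lemma mon6_expand (a : Fin 6 → ℕ) :
    mon6 a = X 0 ^ a 0 * X 1 ^ a 1 * X 2 ^ a 2 * X 3 ^ a 3 * X 4 ^ a 4 * X 5 ^ a 5 := by
  rw [mon6, Fin.prod_univ_six]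

lemma sqTmon (a : Fin 6 → ℕ) :
    sqT 6 (mon6 a) = (X 0 + X 0^2) ^ a 0 * (X 1 + X 1^2) ^ a 1 * (X 2 + X 2^2) ^ a 2
      * (X 3 + X 3^2) ^ a 3 * (X 4 + X 4^2) ^ a 4 * (X 5 + X 5^2) ^ a 5 := by
  rw [mon6_expand, sqT]
  simp only [map_mul, map_pow, aeval_X]

lemma hR2 : (2 : R6) = 0 := CharTwo.two_eq_zero

lemma p1 (j : Fin 6) : ((X j + X j^2 : R6)) ^ 1 = X j ^ 1 + X j ^ 2 := by ring
lemma p2 (j : Fin 6) : ((X j + X j^2 : R6)) ^ 2 = X j^2 + X j^4 := by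
  ring_nf; simp only [hR2, mul_zero, zero_mul, mul_one, add_zero, zero_add]
lemma p3 (j : Fin 6) : ((X j + X j^2 : R6)) ^ 3 = X j^3 + X j^4 + X j^5 + X j^6 := by
  have h3 : (3 : R6) = 1 := by rw [show (3:R6) = 2+1 by norm_num, hR2]; ring
  ring_nf; simp only [hR2, h3, mul_zero, zero_mul, mul_one, add_zero, zero_add]
lemma p4 (j : Fin 6) : ((X j + X j^2 : R6)) ^ 4 = X j^4 + X j^8 := by
  have h4 : (4 : R6) = 0 := by rw [show (4:R6) = 2*2 by norm_num, hR2]; ring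
  have h6 : (6 : R6) = 0 := by rw [show (6:R6) = 2*3 by norm_num, hR2]; ring
  ring_nf; simp only [hR2, h4, h6, mul_zero, zero_mul, mul_one, add_zero, zero_add]
lemma p5 (j : Fin 6) : ((X j + X j^2 : R6)) ^ 5 = X j^5 + X j^6 + X j^9 + X j^10 := by
  have h5 : (5 : R6) = 1 := by rw [show (5:R6) = 2*2+1 by norm_num, hR2]; ring
  have h10 : (10 : R6) = 0 := by rw [show (10:R6) = 2*5 by norm_num, hR2]; ring
  ring_nf; simp only [hR2, h5, h10, mul_zero, zero_mul, mul_one, add_zero, zero_add]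

lemma mon6_hom (a : Fin 6 → ℕ) : (mon6 a).IsHomogeneous (∑ j, a j) :=
  MvPolynomial.IsHomogeneous.prod Finset.univ _ _ (fun j _ => isHomogeneous_X_pow j (a j))

lemma hc13_mon6 (e : Fin 6 → ℕ) :
    homogeneousComponent 13 (mon6 e) = if 13 = (∑ j, e j) then mon6 e else 0 :=
  homogeneousComponent_of_mem ((mem_homogeneousSubmodule _ _).2 (mon6_hom e))

lemma expF1 : sqT 6 (mon6 ![2,4,3,1,1,1]) = mon6 ![2,4,3,1,1,1] + mon6 ![2,4,3,1,1,2] + mon6 ![2,4,3,1,2,1] + mon6 ![2,4,3,1,2,2] + mon6 ![2,4,3,2,1,1] + mon6 ![2,4,3,2,1,2] + mon6 ![2,4,3,2,2,1] + mon6 ![2,4,3,2,2,2] + mon6 ![2,4,4,1,1,1] + mon6 ![2,4,4,1,1,2] + mon6 ![2,4,4,1,2,1] + mon6 ![2,4,4,1,2,2] + mon6 ![2,4,4,2,1,1] + mon6 ![2,4,4,2,1,2] + mon6 ![2,4,4,2,2,1] + mon6 ![2,4,4,2,2,2] + mon6 ![2,4,5,1,1,1] + mon6 ![2,4,5,1,1,2]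 + mon6 ![2,4,5,1,2,1] + mon6 ![2,4,5,1,2,2] + mon6 ![2,4,5,2,1,1] + mon6 ![2,4,5,2,1,2] + mon6 ![2,4,5,2,2,1] + mon6 ![2,4,5,2,2,2] + mon6 ![2,4,6,1,1,1] + mon6 ![2,4,6,1,1,2] + mon6 ![2,4,6,1,2,1] + mon6 ![2,4,6,1,2,2] + mon6 ![2,4,6,2,1,1] + mon6 ![2,4,6,2,1,2] + mon6 ![2,4,6,2,2,1] + mon6 ![2,4,6,2,2,2] + mon6 ![2,8,3,1,1,1] + mon6 ![2,8,3,1,1,2] + mon6 ![2,8,3,1,2,1] + mon6 ![2,8,3,1,2,2] + mon6 ![2,8,3,2,1,1] + mon6 ![2,8,3,2,1,2] + mon6 ![2,8,3,2,2,1] + mon6 ![2,8,3,2,2,2] + mon6 ![2,8,4,1,1,1] + mon6 ![2,8,4,1,1,2] + mon6 ![2,8,4,1,2,1] + mon6 ![2,8,4,1,2,2] + mon6 ![2,8,4,2,1,1] + mon6 ![2,8,4,2,1,2] + mon6 ![2,8,4,2,2,1] + mon6 ![2,8,4,2,2,2] + mon6 ![2,8,5,1,1,1] + mon6 ![2,8,5,1,1,2]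 + mon6 ![2,8,5,1,2,1] + mon6 ![2,8,5,1,2,2] + mon6 ![2,8,5,2,1,1] + mon6 ![2,8,5,2,1,2] + mon6 ![2,8,5,2,2,1] + mon6 ![2,8,5,2,2,2] + mon6 ![2,8,6,1,1,1] + mon6 ![2,8,6,1,1,2] + mon6 ![2,8,6,1,2,1] + mon6 ![2,8,6,1,2,2] + mon6 ![2,8,6,2,1,1] + mon6 ![2,8,6,2,1,2] + mon6 ![2,8,6,2,2,1] + mon6 ![2,8,6,2,2,2] + mon6 ![4,4,3,1,1,1] + mon6 ![4,4,3,1,1,2] + mon6 ![4,4,3,1,2,1] + mon6 ![4,4,3,1,2,2] + mon6 ![4,4,3,2,1,1] + mon6 ![4,4,3,2,1,2] + mon6 ![4,4,3,2,2,1] + mon6 ![4,4,3,2,2,2] + mon6 ![4,4,4,1,1,1] + mon6 ![4,4,4,1,1,2] + mon6 ![4,4,4,1,2,1] + mon6 ![4,4,4,1,2,2] + mon6 ![4,4,4,2,1,1] + mon6 ![4,4,4,2,1,2] + mon6 ![4,4,4,2,2,1] + mon6 ![4,4,4,2,2,2] + mon6 ![4,4,5,1,1,1] + mon6 ![4,4,5,1,1,2]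 + mon6 ![4,4,5,1,2,1] + mon6 ![4,4,5,1,2,2] + mon6 ![4,4,5,2,1,1] + mon6 ![4,4,5,2,1,2] + mon6 ![4,4,5,2,2,1] + mon6 ![4,4,5,2,2,2] + mon6 ![4,4,6,1,1,1] + mon6 ![4,4,6,1,1,2] + mon6 ![4,4,6,1,2,1] + mon6 ![4,4,6,1,2,2] + mon6 ![4,4,6,2,1,1] + mon6 ![4,4,6,2,1,2] + mon6 ![4,4,6,2,2,1] + mon6 ![4,4,6,2,2,2] + mon6 ![4,8,3,1,1,1] + mon6 ![4,8,3,1,1,2] + mon6 ![4,8,3,1,2,1] + mon6 ![4,8,3,1,2,2] + mon6 ![4,8,3,2,1,1] + mon6 ![4,8,3,2,1,2] + mon6 ![4,8,3,2,2,1] + mon6 ![4,8,3,2,2,2] + mon6 ![4,8,4,1,1,1] + mon6 ![4,8,4,1,1,2] + mon6 ![4,8,4,1,2,1] + mon6 ![4,8,4,1,2,2] + mon6 ![4,8,4,2,1,1] + mon6 ![4,8,4,2,1,2] + mon6 ![4,8,4,2,2,1] + mon6 ![4,8,4,2,2,2] + mon6 ![4,8,5,1,1,1] + mon6 ![4,8,5,1,1,2]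 + mon6 ![4,8,5,1,2,1] + mon6 ![4,8,5,1,2,2] + mon6 ![4,8,5,2,1,1] + mon6 ![4,8,5,2,1,2] + mon6 ![4,8,5,2,2,1] + mon6 ![4,8,5,2,2,2] + mon6 ![4,8,6,1,1,1] + mon6 ![4,8,6,1,1,2] + mon6 ![4,8,6,1,2,1] + mon6 ![4,8,6,1,2,2] + mon6 ![4,8,6,2,1,1] + mon6 ![4,8,6,2,1,2] + mon6 ![4,8,6,2,2,1] + mon6 ![4,8,6,2,2,2] := by
  rw [sqTmon]
  simp only [c6_0, c6_1, c6_2, c6_3, c6_4, c6_5, mon6_expand, p1, p2, p3, p4, p5]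
  ring

lemma hcF1 : homogeneousComponent 13 (sqT 6 (mon6 ![2,4,3,1,1,1])) = mon6 ![2,4,3,1,1,2] + mon6 ![2,4,3,1,2,1] + mon6 ![2,4,3,2,1,1] + mon6 ![2,4,4,1,1,1] := by
  rw [expF1]
  simp only [map_add, hc13_mon6, Fin.sum_univ_six, c6_0, c6_1, c6_2, c6_3, c6_4, c6_5]
  norm_num

lemma expF2a : sqT 6 (mon6 ![1,2,3,2,2,1]) = mon6 ![1,2,3,2,2,1] + mon6 ![1,2,3,2,2,2] + mon6 ![1,2,3,2,4,1] + mon6 ![1,2,3,2,4,2] + mon6 ![1,2,3,4,2,1] + mon6 ![1,2,3,4,2,2] + mon6 ![1,2,3,4,4,1] + mon6 ![1,2,3,4,4,2] + mon6 ![1,2,4,2,2,1] + mon6 ![1,2,4,2,2,2] + mon6 ![1,2,4,2,4,1] + mon6 ![1,2,4,2,4,2] + mon6 ![1,2,4,4,2,1] + mon6 ![1,2,4,4,2,2] + mon6 ![1,2,4,4,4,1] + mon6 ![1,2,4,4,4,2] + mon6 ![1,2,5,2,2,1] + mon6 ![1,2,5,2,2,2] + mon6 ![1,2,5,2,4,1]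 + mon6 ![1,2,5,2,4,2] + mon6 ![1,2,5,4,2,1] + mon6 ![1,2,5,4,2,2] + mon6 ![1,2,5,4,4,1] + mon6 ![1,2,5,4,4,2] + mon6 ![1,2,6,2,2,1] + mon6 ![1,2,6,2,2,2] + mon6 ![1,2,6,2,4,1] + mon6 ![1,2,6,2,4,2] + mon6 ![1,2,6,4,2,1] + mon6 ![1,2,6,4,2,2] + mon6 ![1,2,6,4,4,1] + mon6 ![1,2,6,4,4,2] + mon6 ![1,4,3,2,2,1] + mon6 ![1,4,3,2,2,2] + mon6 ![1,4,3,2,4,1] + mon6 ![1,4,3,2,4,2] + mon6 ![1,4,3,4,2,1] + mon6 ![1,4,3,4,2,2] + mon6 ![1,4,3,4,4,1] + mon6 ![1,4,3,4,4,2] + mon6 ![1,4,4,2,2,1] + mon6 ![1,4,4,2,2,2] + mon6 ![1,4,4,2,4,1] + mon6 ![1,4,4,2,4,2] + mon6 ![1,4,4,4,2,1] + mon6 ![1,4,4,4,2,2] + mon6 ![1,4,4,4,4,1] + mon6 ![1,4,4,4,4,2] + mon6 ![1,4,5,2,2,1] + mon6 ![1,4,5,2,2,2] + mon6 ![1,4,5,2,4,1]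 + mon6 ![1,4,5,2,4,2] + mon6 ![1,4,5,4,2,1] + mon6 ![1,4,5,4,2,2] + mon6 ![1,4,5,4,4,1] + mon6 ![1,4,5,4,4,2] + mon6 ![1,4,6,2,2,1] + mon6 ![1,4,6,2,2,2] + mon6 ![1,4,6,2,4,1] + mon6 ![1,4,6,2,4,2] + mon6 ![1,4,6,4,2,1] + mon6 ![1,4,6,4,2,2] + mon6 ![1,4,6,4,4,1] + mon6 ![1,4,6,4,4,2] + mon6 ![2,2,3,2,2,1] + mon6 ![2,2,3,2,2,2] + mon6 ![2,2,3,2,4,1] + mon6 ![2,2,3,2,4,2] + mon6 ![2,2,3,4,2,1] + mon6 ![2,2,3,4,2,2] + mon6 ![2,2,3,4,4,1] + mon6 ![2,2,3,4,4,2] + mon6 ![2,2,4,2,2,1] + mon6 ![2,2,4,2,2,2] + mon6 ![2,2,4,2,4,1] + mon6 ![2,2,4,2,4,2] + mon6 ![2,2,4,4,2,1] + mon6 ![2,2,4,4,2,2] + mon6 ![2,2,4,4,4,1] + mon6 ![2,2,4,4,4,2] + mon6 ![2,2,5,2,2,1] + mon6 ![2,2,5,2,2,2] + mon6 ![2,2,5,2,4,1]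 + mon6 ![2,2,5,2,4,2] + mon6 ![2,2,5,4,2,1] + mon6 ![2,2,5,4,2,2] + mon6 ![2,2,5,4,4,1] + mon6 ![2,2,5,4,4,2] + mon6 ![2,2,6,2,2,1] + mon6 ![2,2,6,2,2,2] + mon6 ![2,2,6,2,4,1] + mon6 ![2,2,6,2,4,2] + mon6 ![2,2,6,4,2,1] + mon6 ![2,2,6,4,2,2] + mon6 ![2,2,6,4,4,1] + mon6 ![2,2,6,4,4,2] + mon6 ![2,4,3,2,2,1] + mon6 ![2,4,3,2,2,2] + mon6 ![2,4,3,2,4,1] + mon6 ![2,4,3,2,4,2] + mon6 ![2,4,3,4,2,1] + mon6 ![2,4,3,4,2,2] + mon6 ![2,4,3,4,4,1] + mon6 ![2,4,3,4,4,2] + mon6 ![2,4,4,2,2,1] + mon6 ![2,4,4,2,2,2] + mon6 ![2,4,4,2,4,1] + mon6 ![2,4,4,2,4,2] + mon6 ![2,4,4,4,2,1] + mon6 ![2,4,4,4,2,2] + mon6 ![2,4,4,4,4,1] + mon6 ![2,4,4,4,4,2] + mon6 ![2,4,5,2,2,1] + mon6 ![2,4,5,2,2,2] + mon6 ![2,4,5,2,4,1]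 + mon6 ![2,4,5,2,4,2] + mon6 ![2,4,5,4,2,1] + mon6 ![2,4,5,4,2,2] + mon6 ![2,4,5,4,4,1] + mon6 ![2,4,5,4,4,2] + mon6 ![2,4,6,2,2,1] + mon6 ![2,4,6,2,2,2] + mon6 ![2,4,6,2,4,1] + mon6 ![2,4,6,2,4,2] + mon6 ![2,4,6,4,2,1] + mon6 ![2,4,6,4,2,2] + mon6 ![2,4,6,4,4,1] + mon6 ![2,4,6,4,4,2] := by
  rw [sqTmon]
  simp only [c6_0, c6_1, c6_2, c6_3, c6_4, c6_5, mon6_expand, p1, p2, p3, p4, p5]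
  ring

lemma hcF2a : homogeneousComponent 13 (sqT 6 (mon6 ![1,2,3,2,2,1])) = mon6 ![1,2,3,2,4,1] + mon6 ![1,2,3,4,2,1] + mon6 ![1,2,4,2,2,2] + mon6 ![1,2,5,2,2,1] + mon6 ![1,4,3,2,2,1] + mon6 ![2,2,3,2,2,2] + mon6 ![2,2,4,2,2,1] := by
  rw [expF2a]
  simp only [map_add, hc13_mon6, Fin.sum_univ_six, c6_0, c6_1, c6_2, c6_3, c6_4, c6_5]
  norm_num

lemma expF2b : sqT 6 (mon6 ![1,2,3,2,1,2]) = mon6 ![1,2,3,2,1,2] + mon6 ![1,2,3,2,1,4] + mon6 ![1,2,3,2,2,2] + mon6 ![1,2,3,2,2,4] + mon6 ![1,2,3,4,1,2] + mon6 ![1,2,3,4,1,4] + mon6 ![1,2,3,4,2,2] + mon6 ![1,2,3,4,2,4] + mon6 ![1,2,4,2,1,2] + mon6 ![1,2,4,2,1,4] + mon6 ![1,2,4,2,2,2] + mon6 ![1,2,4,2,2,4] + mon6 ![1,2,4,4,1,2] + mon6 ![1,2,4,4,1,4] + mon6 ![1,2,4,4,2,2] + mon6 ![1,2,4,4,2,4]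 + mon6 ![1,2,5,2,1,2] + mon6 ![1,2,5,2,1,4] + mon6 ![1,2,5,2,2,2] + mon6 ![1,2,5,2,2,4] + mon6 ![1,2,5,4,1,2] + mon6 ![1,2,5,4,1,4] + mon6 ![1,2,5,4,2,2] + mon6 ![1,2,5,4,2,4] + mon6 ![1,2,6,2,1,2] + mon6 ![1,2,6,2,1,4] + mon6 ![1,2,6,2,2,2] + mon6 ![1,2,6,2,2,4] + mon6 ![1,2,6,4,1,2] + mon6 ![1,2,6,4,1,4] + mon6 ![1,2,6,4,2,2] + mon6 ![1,2,6,4,2,4] + mon6 ![1,4,3,2,1,2] + mon6 ![1,4,3,2,1,4] + mon6 ![1,4,3,2,2,2] + mon6 ![1,4,3,2,2,4] + mon6 ![1,4,3,4,1,2] + mon6 ![1,4,3,4,1,4] + mon6 ![1,4,3,4,2,2] + mon6 ![1,4,3,4,2,4] + mon6 ![1,4,4,2,1,2] + mon6 ![1,4,4,2,1,4] + mon6 ![1,4,4,2,2,2] + mon6 ![1,4,4,2,2,4] + mon6 ![1,4,4,4,1,2] + mon6 ![1,4,4,4,1,4] + mon6 ![1,4,4,4,2,2] + mon6 ![1,4,4,4,2,4]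 + mon6 ![1,4,5,2,1,2] + mon6 ![1,4,5,2,1,4] + mon6 ![1,4,5,2,2,2] + mon6 ![1,4,5,2,2,4] + mon6 ![1,4,5,4,1,2] + mon6 ![1,4,5,4,1,4] + mon6 ![1,4,5,4,2,2] + mon6 ![1,4,5,4,2,4] + mon6 ![1,4,6,2,1,2] + mon6 ![1,4,6,2,1,4] + mon6 ![1,4,6,2,2,2] + mon6 ![1,4,6,2,2,4] + mon6 ![1,4,6,4,1,2] + mon6 ![1,4,6,4,1,4] + mon6 ![1,4,6,4,2,2] + mon6 ![1,4,6,4,2,4] + mon6 ![2,2,3,2,1,2] + mon6 ![2,2,3,2,1,4] + mon6 ![2,2,3,2,2,2] + mon6 ![2,2,3,2,2,4] + mon6 ![2,2,3,4,1,2] + mon6 ![2,2,3,4,1,4] + mon6 ![2,2,3,4,2,2] + mon6 ![2,2,3,4,2,4] + mon6 ![2,2,4,2,1,2] + mon6 ![2,2,4,2,1,4] + mon6 ![2,2,4,2,2,2] + mon6 ![2,2,4,2,2,4] + mon6 ![2,2,4,4,1,2] + mon6 ![2,2,4,4,1,4] + mon6 ![2,2,4,4,2,2] + mon6 ![2,2,4,4,2,4]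 + mon6 ![2,2,5,2,1,2] + mon6 ![2,2,5,2,1,4] + mon6 ![2,2,5,2,2,2] + mon6 ![2,2,5,2,2,4] + mon6 ![2,2,5,4,1,2] + mon6 ![2,2,5,4,1,4] + mon6 ![2,2,5,4,2,2] + mon6 ![2,2,5,4,2,4] + mon6 ![2,2,6,2,1,2] + mon6 ![2,2,6,2,1,4] + mon6 ![2,2,6,2,2,2] + mon6 ![2,2,6,2,2,4] + mon6 ![2,2,6,4,1,2] + mon6 ![2,2,6,4,1,4] + mon6 ![2,2,6,4,2,2] + mon6 ![2,2,6,4,2,4] + mon6 ![2,4,3,2,1,2] + mon6 ![2,4,3,2,1,4] + mon6 ![2,4,3,2,2,2] + mon6 ![2,4,3,2,2,4] + mon6 ![2,4,3,4,1,2] + mon6 ![2,4,3,4,1,4] + mon6 ![2,4,3,4,2,2] + mon6 ![2,4,3,4,2,4] + mon6 ![2,4,4,2,1,2] + mon6 ![2,4,4,2,1,4] + mon6 ![2,4,4,2,2,2] + mon6 ![2,4,4,2,2,4] + mon6 ![2,4,4,4,1,2] + mon6 ![2,4,4,4,1,4] + mon6 ![2,4,4,4,2,2] + mon6 ![2,4,4,4,2,4]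 + mon6 ![2,4,5,2,1,2] + mon6 ![2,4,5,2,1,4] + mon6 ![2,4,5,2,2,2] + mon6 ![2,4,5,2,2,4] + mon6 ![2,4,5,4,1,2] + mon6 ![2,4,5,4,1,4] + mon6 ![2,4,5,4,2,2] + mon6 ![2,4,5,4,2,4] + mon6 ![2,4,6,2,1,2] + mon6 ![2,4,6,2,1,4] + mon6 ![2,4,6,2,2,2] + mon6 ![2,4,6,2,2,4] + mon6 ![2,4,6,4,1,2] + mon6 ![2,4,6,4,1,4] + mon6 ![2,4,6,4,2,2] + mon6 ![2,4,6,4,2,4] := by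
  rw [sqTmon]
  simp only [c6_0, c6_1, c6_2, c6_3, c6_4, c6_5, mon6_expand, p1, p2, p3, p4, p5]
  ring

lemma hcF2b : homogeneousComponent 13 (sqT 6 (mon6 ![1,2,3,2,1,2])) = mon6 ![1,2,3,2,1,4] + mon6 ![1,2,3,4,1,2] + mon6 ![1,2,4,2,2,2] + mon6 ![1,2,5,2,1,2] + mon6 ![1,4,3,2,1,2] + mon6 ![2,2,3,2,2,2] + mon6 ![2,2,4,2,1,2] := by
  rw [expF2b]
  simp only [map_add, hc13_mon6, Fin.sum_univ_six, c6_0, c6_1, c6_2, c6_3, c6_4, c6_5]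
  norm_num

lemma expF2c : sqT 6 (mon6 ![1,2,3,1,2,2]) = mon6 ![1,2,3,1,2,2] + mon6 ![1,2,3,1,2,4] + mon6 ![1,2,3,1,4,2] + mon6 ![1,2,3,1,4,4] + mon6 ![1,2,3,2,2,2] + mon6 ![1,2,3,2,2,4] + mon6 ![1,2,3,2,4,2] + mon6 ![1,2,3,2,4,4] + mon6 ![1,2,4,1,2,2] + mon6 ![1,2,4,1,2,4] + mon6 ![1,2,4,1,4,2] + mon6 ![1,2,4,1,4,4] + mon6 ![1,2,4,2,2,2] + mon6 ![1,2,4,2,2,4] + mon6 ![1,2,4,2,4,2] + mon6 ![1,2,4,2,4,4] + mon6 ![1,2,5,1,2,2] + mon6 ![1,2,5,1,2,4] + mon6 ![1,2,5,1,4,2] + mon6 ![1,2,5,1,4,4] + mon6 ![1,2,5,2,2,2] + mon6 ![1,2,5,2,2,4] + mon6 ![1,2,5,2,4,2] + mon6 ![1,2,5,2,4,4] + mon6 ![1,2,6,1,2,2] + mon6 ![1,2,6,1,2,4] + mon6 ![1,2,6,1,4,2] + mon6 ![1,2,6,1,4,4] + mon6 ![1,2,6,2,2,2] + mon6 ![1,2,6,2,2,4]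 + mon6 ![1,2,6,2,4,2] + mon6 ![1,2,6,2,4,4] + mon6 ![1,4,3,1,2,2] + mon6 ![1,4,3,1,2,4] + mon6 ![1,4,3,1,4,2] + mon6 ![1,4,3,1,4,4] + mon6 ![1,4,3,2,2,2] + mon6 ![1,4,3,2,2,4] + mon6 ![1,4,3,2,4,2] + mon6 ![1,4,3,2,4,4] + mon6 ![1,4,4,1,2,2] + mon6 ![1,4,4,1,2,4] + mon6 ![1,4,4,1,4,2] + mon6 ![1,4,4,1,4,4] + mon6 ![1,4,4,2,2,2] + mon6 ![1,4,4,2,2,4] + mon6 ![1,4,4,2,4,2] + mon6 ![1,4,4,2,4,4] + mon6 ![1,4,5,1,2,2] + mon6 ![1,4,5,1,2,4] + mon6 ![1,4,5,1,4,2] + mon6 ![1,4,5,1,4,4] + mon6 ![1,4,5,2,2,2] + mon6 ![1,4,5,2,2,4] + mon6 ![1,4,5,2,4,2] + mon6 ![1,4,5,2,4,4] + mon6 ![1,4,6,1,2,2] + mon6 ![1,4,6,1,2,4] + mon6 ![1,4,6,1,4,2] + mon6 ![1,4,6,1,4,4] + mon6 ![1,4,6,2,2,2] + mon6 ![1,4,6,2,2,4]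 + mon6 ![1,4,6,2,4,2] + mon6 ![1,4,6,2,4,4] + mon6 ![2,2,3,1,2,2] + mon6 ![2,2,3,1,2,4] + mon6 ![2,2,3,1,4,2] + mon6 ![2,2,3,1,4,4] + mon6 ![2,2,3,2,2,2] + mon6 ![2,2,3,2,2,4] + mon6 ![2,2,3,2,4,2] + mon6 ![2,2,3,2,4,4] + mon6 ![2,2,4,1,2,2] + mon6 ![2,2,4,1,2,4] + mon6 ![2,2,4,1,4,2] + mon6 ![2,2,4,1,4,4] + mon6 ![2,2,4,2,2,2] + mon6 ![2,2,4,2,2,4] + mon6 ![2,2,4,2,4,2] + mon6 ![2,2,4,2,4,4] + mon6 ![2,2,5,1,2,2] + mon6 ![2,2,5,1,2,4] + mon6 ![2,2,5,1,4,2] + mon6 ![2,2,5,1,4,4] + mon6 ![2,2,5,2,2,2] + mon6 ![2,2,5,2,2,4] + mon6 ![2,2,5,2,4,2] + mon6 ![2,2,5,2,4,4] + mon6 ![2,2,6,1,2,2] + mon6 ![2,2,6,1,2,4] + mon6 ![2,2,6,1,4,2] + mon6 ![2,2,6,1,4,4] + mon6 ![2,2,6,2,2,2] + mon6 ![2,2,6,2,2,4]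 + mon6 ![2,2,6,2,4,2] + mon6 ![2,2,6,2,4,4] + mon6 ![2,4,3,1,2,2] + mon6 ![2,4,3,1,2,4] + mon6 ![2,4,3,1,4,2] + mon6 ![2,4,3,1,4,4] + mon6 ![2,4,3,2,2,2] + mon6 ![2,4,3,2,2,4] + mon6 ![2,4,3,2,4,2] + mon6 ![2,4,3,2,4,4] + mon6 ![2,4,4,1,2,2] + mon6 ![2,4,4,1,2,4] + mon6 ![2,4,4,1,4,2] + mon6 ![2,4,4,1,4,4] + mon6 ![2,4,4,2,2,2] + mon6 ![2,4,4,2,2,4] + mon6 ![2,4,4,2,4,2] + mon6 ![2,4,4,2,4,4] + mon6 ![2,4,5,1,2,2] + mon6 ![2,4,5,1,2,4] + mon6 ![2,4,5,1,4,2] + mon6 ![2,4,5,1,4,4] + mon6 ![2,4,5,2,2,2] + mon6 ![2,4,5,2,2,4] + mon6 ![2,4,5,2,4,2] + mon6 ![2,4,5,2,4,4] + mon6 ![2,4,6,1,2,2] + mon6 ![2,4,6,1,2,4] + mon6 ![2,4,6,1,4,2] + mon6 ![2,4,6,1,4,4] + mon6 ![2,4,6,2,2,2] + mon6 ![2,4,6,2,2,4]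 + mon6 ![2,4,6,2,4,2] + mon6 ![2,4,6,2,4,4] := by
  rw [sqTmon]
  simp only [c6_0, c6_1, c6_2, c6_3, c6_4, c6_5, mon6_expand, p1, p2, p3, p4, p5]
  ring

lemma hcF2c : homogeneousComponent 13 (sqT 6 (mon6 ![1,2,3,1,2,2])) = mon6 ![1,2,3,1,2,4] + mon6 ![1,2,3,1,4,2] + mon6 ![1,2,4,2,2,2] + mon6 ![1,2,5,1,2,2] + mon6 ![1,4,3,1,2,2] + mon6 ![2,2,3,2,2,2] + mon6 ![2,2,4,1,2,2] := by
  rw [expF2c]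
  simp only [map_add, hc13_mon6, Fin.sum_univ_six, c6_0, c6_1, c6_2, c6_3, c6_4, c6_5]
  norm_num

lemma expF2d : sqT 6 (mon6 ![1,2,5,1,1,1]) = mon6 ![1,2,5,1,1,1] + mon6 ![1,2,5,1,1,2] + mon6 ![1,2,5,1,2,1] + mon6 ![1,2,5,1,2,2] + mon6 ![1,2,5,2,1,1] + mon6 ![1,2,5,2,1,2] + mon6 ![1,2,5,2,2,1] + mon6 ![1,2,5,2,2,2] + mon6 ![1,2,6,1,1,1] + mon6 ![1,2,6,1,1,2] + mon6 ![1,2,6,1,2,1] + mon6 ![1,2,6,1,2,2] + mon6 ![1,2,6,2,1,1] + mon6 ![1,2,6,2,1,2] + mon6 ![1,2,6,2,2,1] + mon6 ![1,2,6,2,2,2] + mon6 ![1,2,9,1,1,1] + mon6 ![1,2,9,1,1,2] + mon6 ![1,2,9,1,2,1] + mon6 ![1,2,9,1,2,2] + mon6 ![1,2,9,2,1,1] + mon6 ![1,2,9,2,1,2] + mon6 ![1,2,9,2,2,1] + mon6 ![1,2,9,2,2,2] + mon6 ![1,2,10,1,1,1] + mon6 ![1,2,10,1,1,2] + mon6 ![1,2,10,1,2,1]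 + mon6 ![1,2,10,1,2,2] + mon6 ![1,2,10,2,1,1] + mon6 ![1,2,10,2,1,2] + mon6 ![1,2,10,2,2,1] + mon6 ![1,2,10,2,2,2] + mon6 ![1,4,5,1,1,1] + mon6 ![1,4,5,1,1,2] + mon6 ![1,4,5,1,2,1] + mon6 ![1,4,5,1,2,2] + mon6 ![1,4,5,2,1,1] + mon6 ![1,4,5,2,1,2] + mon6 ![1,4,5,2,2,1] + mon6 ![1,4,5,2,2,2] + mon6 ![1,4,6,1,1,1] + mon6 ![1,4,6,1,1,2] + mon6 ![1,4,6,1,2,1] + mon6 ![1,4,6,1,2,2] + mon6 ![1,4,6,2,1,1] + mon6 ![1,4,6,2,1,2] + mon6 ![1,4,6,2,2,1] + mon6 ![1,4,6,2,2,2] + mon6 ![1,4,9,1,1,1] + mon6 ![1,4,9,1,1,2] + mon6 ![1,4,9,1,2,1] + mon6 ![1,4,9,1,2,2] + mon6 ![1,4,9,2,1,1] + mon6 ![1,4,9,2,1,2] + mon6 ![1,4,9,2,2,1] + mon6 ![1,4,9,2,2,2] + mon6 ![1,4,10,1,1,1] + mon6 ![1,4,10,1,1,2] + mon6 ![1,4,10,1,2,1]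 + mon6 ![1,4,10,1,2,2] + mon6 ![1,4,10,2,1,1] + mon6 ![1,4,10,2,1,2] + mon6 ![1,4,10,2,2,1] + mon6 ![1,4,10,2,2,2] + mon6 ![2,2,5,1,1,1] + mon6 ![2,2,5,1,1,2] + mon6 ![2,2,5,1,2,1] + mon6 ![2,2,5,1,2,2] + mon6 ![2,2,5,2,1,1] + mon6 ![2,2,5,2,1,2] + mon6 ![2,2,5,2,2,1] + mon6 ![2,2,5,2,2,2] + mon6 ![2,2,6,1,1,1] + mon6 ![2,2,6,1,1,2] + mon6 ![2,2,6,1,2,1] + mon6 ![2,2,6,1,2,2] + mon6 ![2,2,6,2,1,1] + mon6 ![2,2,6,2,1,2] + mon6 ![2,2,6,2,2,1] + mon6 ![2,2,6,2,2,2] + mon6 ![2,2,9,1,1,1] + mon6 ![2,2,9,1,1,2] + mon6 ![2,2,9,1,2,1] + mon6 ![2,2,9,1,2,2] + mon6 ![2,2,9,2,1,1] + mon6 ![2,2,9,2,1,2] + mon6 ![2,2,9,2,2,1] + mon6 ![2,2,9,2,2,2] + mon6 ![2,2,10,1,1,1] + mon6 ![2,2,10,1,1,2] + mon6 ![2,2,10,1,2,1]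 + mon6 ![2,2,10,1,2,2] + mon6 ![2,2,10,2,1,1] + mon6 ![2,2,10,2,1,2] + mon6 ![2,2,10,2,2,1] + mon6 ![2,2,10,2,2,2] + mon6 ![2,4,5,1,1,1] + mon6 ![2,4,5,1,1,2] + mon6 ![2,4,5,1,2,1] + mon6 ![2,4,5,1,2,2] + mon6 ![2,4,5,2,1,1] + mon6 ![2,4,5,2,1,2] + mon6 ![2,4,5,2,2,1] + mon6 ![2,4,5,2,2,2] + mon6 ![2,4,6,1,1,1] + mon6 ![2,4,6,1,1,2] + mon6 ![2,4,6,1,2,1] + mon6 ![2,4,6,1,2,2] + mon6 ![2,4,6,2,1,1] + mon6 ![2,4,6,2,1,2] + mon6 ![2,4,6,2,2,1] + mon6 ![2,4,6,2,2,2] + mon6 ![2,4,9,1,1,1] + mon6 ![2,4,9,1,1,2] + mon6 ![2,4,9,1,2,1] + mon6 ![2,4,9,1,2,2] + mon6 ![2,4,9,2,1,1] + mon6 ![2,4,9,2,1,2] + mon6 ![2,4,9,2,2,1] + mon6 ![2,4,9,2,2,2] + mon6 ![2,4,10,1,1,1] + mon6 ![2,4,10,1,1,2] + mon6 ![2,4,10,1,2,1]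 + mon6 ![2,4,10,1,2,2] + mon6 ![2,4,10,2,1,1] + mon6 ![2,4,10,2,1,2] + mon6 ![2,4,10,2,2,1] + mon6 ![2,4,10,2,2,2] := by
  rw [sqTmon]
  simp only [c6_0, c6_1, c6_2, c6_3, c6_4, c6_5, mon6_expand, p1, p2, p3, p4, p5]
  ring

lemma hcF2d : homogeneousComponent 13 (sqT 6 (mon6 ![1,2,5,1,1,1])) = mon6 ![1,2,5,1,2,2] + mon6 ![1,2,5,2,1,2] + mon6 ![1,2,5,2,2,1] + mon6 ![1,2,6,1,1,2] + mon6 ![1,2,6,1,2,1] + mon6 ![1,2,6,2,1,1] + mon6 ![1,4,5,1,1,1] + mon6 ![2,2,5,1,1,2] + mon6 ![2,2,5,1,2,1] + mon6 ![2,2,5,2,1,1] + mon6 ![2,2,6,1,1,1] := by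
  rw [expF2d]
  simp only [map_add, hc13_mon6, Fin.sum_univ_six, c6_0, c6_1, c6_2, c6_3, c6_4, c6_5]
  norm_num

lemma expF4 : sqT 6 (mon6 ![1,2,3,1,1,1]) = mon6 ![1,2,3,1,1,1] + mon6 ![1,2,3,1,1,2] + mon6 ![1,2,3,1,2,1] + mon6 ![1,2,3,1,2,2] + mon6 ![1,2,3,2,1,1] + mon6 ![1,2,3,2,1,2] + mon6 ![1,2,3,2,2,1] + mon6 ![1,2,3,2,2,2] + mon6 ![1,2,4,1,1,1] + mon6 ![1,2,4,1,1,2] + mon6 ![1,2,4,1,2,1] + mon6 ![1,2,4,1,2,2] + mon6 ![1,2,4,2,1,1] + mon6 ![1,2,4,2,1,2] + mon6 ![1,2,4,2,2,1] + mon6 ![1,2,4,2,2,2] + mon6 ![1,2,5,1,1,1] + mon6 ![1,2,5,1,1,2] + mon6 ![1,2,5,1,2,1] + mon6 ![1,2,5,1,2,2] + mon6 ![1,2,5,2,1,1] + mon6 ![1,2,5,2,1,2] + mon6 ![1,2,5,2,2,1] + mon6 ![1,2,5,2,2,2] + mon6 ![1,2,6,1,1,1] + mon6 ![1,2,6,1,1,2]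 + mon6 ![1,2,6,1,2,1] + mon6 ![1,2,6,1,2,2] + mon6 ![1,2,6,2,1,1] + mon6 ![1,2,6,2,1,2] + mon6 ![1,2,6,2,2,1] + mon6 ![1,2,6,2,2,2] + mon6 ![1,4,3,1,1,1] + mon6 ![1,4,3,1,1,2] + mon6 ![1,4,3,1,2,1] + mon6 ![1,4,3,1,2,2] + mon6 ![1,4,3,2,1,1] + mon6 ![1,4,3,2,1,2] + mon6 ![1,4,3,2,2,1] + mon6 ![1,4,3,2,2,2] + mon6 ![1,4,4,1,1,1] + mon6 ![1,4,4,1,1,2] + mon6 ![1,4,4,1,2,1] + mon6 ![1,4,4,1,2,2] + mon6 ![1,4,4,2,1,1] + mon6 ![1,4,4,2,1,2] + mon6 ![1,4,4,2,2,1] + mon6 ![1,4,4,2,2,2] + mon6 ![1,4,5,1,1,1] + mon6 ![1,4,5,1,1,2] + mon6 ![1,4,5,1,2,1] + mon6 ![1,4,5,1,2,2] + mon6 ![1,4,5,2,1,1] + mon6 ![1,4,5,2,1,2] + mon6 ![1,4,5,2,2,1] + mon6 ![1,4,5,2,2,2] + mon6 ![1,4,6,1,1,1] + mon6 ![1,4,6,1,1,2]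 + mon6 ![1,4,6,1,2,1] + mon6 ![1,4,6,1,2,2] + mon6 ![1,4,6,2,1,1] + mon6 ![1,4,6,2,1,2] + mon6 ![1,4,6,2,2,1] + mon6 ![1,4,6,2,2,2] + mon6 ![2,2,3,1,1,1] + mon6 ![2,2,3,1,1,2] + mon6 ![2,2,3,1,2,1] + mon6 ![2,2,3,1,2,2] + mon6 ![2,2,3,2,1,1] + mon6 ![2,2,3,2,1,2] + mon6 ![2,2,3,2,2,1] + mon6 ![2,2,3,2,2,2] + mon6 ![2,2,4,1,1,1] + mon6 ![2,2,4,1,1,2] + mon6 ![2,2,4,1,2,1] + mon6 ![2,2,4,1,2,2] + mon6 ![2,2,4,2,1,1] + mon6 ![2,2,4,2,1,2] + mon6 ![2,2,4,2,2,1] + mon6 ![2,2,4,2,2,2] + mon6 ![2,2,5,1,1,1] + mon6 ![2,2,5,1,1,2] + mon6 ![2,2,5,1,2,1] + mon6 ![2,2,5,1,2,2] + mon6 ![2,2,5,2,1,1] + mon6 ![2,2,5,2,1,2] + mon6 ![2,2,5,2,2,1] + mon6 ![2,2,5,2,2,2] + mon6 ![2,2,6,1,1,1] + mon6 ![2,2,6,1,1,2]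 + mon6 ![2,2,6,1,2,1] + mon6 ![2,2,6,1,2,2] + mon6 ![2,2,6,2,1,1] + mon6 ![2,2,6,2,1,2] + mon6 ![2,2,6,2,2,1] + mon6 ![2,2,6,2,2,2] + mon6 ![2,4,3,1,1,1] + mon6 ![2,4,3,1,1,2] + mon6 ![2,4,3,1,2,1] + mon6 ![2,4,3,1,2,2] + mon6 ![2,4,3,2,1,1] + mon6 ![2,4,3,2,1,2] + mon6 ![2,4,3,2,2,1] + mon6 ![2,4,3,2,2,2] + mon6 ![2,4,4,1,1,1] + mon6 ![2,4,4,1,1,2] + mon6 ![2,4,4,1,2,1] + mon6 ![2,4,4,1,2,2] + mon6 ![2,4,4,2,1,1] + mon6 ![2,4,4,2,1,2] + mon6 ![2,4,4,2,2,1] + mon6 ![2,4,4,2,2,2] + mon6 ![2,4,5,1,1,1] + mon6 ![2,4,5,1,1,2] + mon6 ![2,4,5,1,2,1] + mon6 ![2,4,5,1,2,2] + mon6 ![2,4,5,2,1,1] + mon6 ![2,4,5,2,1,2] + mon6 ![2,4,5,2,2,1] + mon6 ![2,4,5,2,2,2] + mon6 ![2,4,6,1,1,1] + mon6 ![2,4,6,1,1,2]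 + mon6 ![2,4,6,1,2,1] + mon6 ![2,4,6,1,2,2] + mon6 ![2,4,6,2,1,1] + mon6 ![2,4,6,2,1,2] + mon6 ![2,4,6,2,2,1] + mon6 ![2,4,6,2,2,2] := by
  rw [sqTmon]
  simp only [c6_0, c6_1, c6_2, c6_3, c6_4, c6_5, mon6_expand, p1, p2, p3, p4, p5]
  ring

lemma hcF4 : homogeneousComponent 13 (sqT 6 (mon6 ![1,2,3,1,1,1])) = mon6 ![1,2,4,2,2,2] + mon6 ![1,2,5,1,2,2] + mon6 ![1,2,5,2,1,2] + mon6 ![1,2,5,2,2,1] + mon6 ![1,2,6,1,1,2] + mon6 ![1,2,6,1,2,1] + mon6 ![1,2,6,2,1,1] + mon6 ![1,4,3,1,2,2] + mon6 ![1,4,3,2,1,2] + mon6 ![1,4,3,2,2,1] + mon6 ![1,4,4,1,1,2] + mon6 ![1,4,4,1,2,1] + mon6 ![1,4,4,2,1,1] + mon6 ![1,4,5,1,1,1] + mon6 ![2,2,3,2,2,2] + mon6 ![2,2,4,1,2,2] + mon6 ![2,2,4,2,1,2] + mon6 ![2,2,4,2,2,1] + mon6 ![2,2,5,1,1,2] +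 mon6 ![2,2,5,1,2,1] + mon6 ![2,2,5,2,1,1] + mon6 ![2,2,6,1,1,1] + mon6 ![2,4,3,1,1,2] + mon6 ![2,4,3,1,2,1] + mon6 ![2,4,3,2,1,1] + mon6 ![2,4,4,1,1,1] := by
  rw [expF4]
  simp only [map_add, hc13_mon6, Fin.sum_univ_six, c6_0, c6_1, c6_2, c6_3, c6_4, c6_5]
  norm_num

lemma homF1 : MvPolynomial.IsHomogeneous (mon6 ![2,4,3,1,1,1]) (13 - 1) :=
  (show (∑ j, (![2,4,3,1,1,1] : Fin 6 → ℕ) j) = 13 - 1 by decide) ▸ mon6_hom _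

lemma homF2 : MvPolynomial.IsHomogeneous (mon6 ![1,2,3,2,2,1] + mon6 ![1,2,3,2,1,2] + mon6 ![1,2,3,1,2,2] + mon6 ![1,2,5,1,1,1]) (13 - 2) := by
  have h0 : MvPolynomial.IsHomogeneous (mon6 ![1,2,3,2,2,1]) (13 - 2) :=
    (show (∑ j, (![1,2,3,2,2,1] : Fin 6 → ℕ) j) = 13 - 2 by decide) ▸ mon6_hom _
  have h1 : MvPolynomial.IsHomogeneous (mon6 ![1,2,3,2,1,2]) (13 - 2) :=
    (show (∑ j, (![1,2,3,2,1,2] : Fin 6 → ℕ) j) = 13 - 2 by decide) ▸ mon6_hom _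
  have h2 : MvPolynomial.IsHomogeneous (mon6 ![1,2,3,1,2,2]) (13 - 2) :=
    (show (∑ j, (![1,2,3,1,2,2] : Fin 6 → ℕ) j) = 13 - 2 by decide) ▸ mon6_hom _
  have h3 : MvPolynomial.IsHomogeneous (mon6 ![1,2,5,1,1,1]) (13 - 2) :=
    (show (∑ j, (![1,2,5,1,1,1] : Fin 6 → ℕ) j) = 13 - 2 by decide) ▸ mon6_hom _
  exact ((h0.add h1).add h2).add h3

lemma homF4 : MvPolynomial.IsHomogeneous (mon6 ![1,2,3,1,1,1]) (13 - 4) :=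
  (show (∑ j, (![1,2,3,1,1,1] : Fin 6 → ℕ) j) = 13 - 4 by decide) ▸ mon6_hom _

lemma hcF2 : homogeneousComponent 13 (sqT 6 (mon6 ![1,2,3,2,2,1] + mon6 ![1,2,3,2,1,2] + mon6 ![1,2,3,1,2,2] + mon6 ![1,2,5,1,1,1])) = mon6 ![1,2,3,2,4,1] + mon6 ![1,2,3,4,2,1] + mon6 ![1,2,4,2,2,2] + mon6 ![1,2,5,2,2,1] + mon6 ![1,4,3,2,2,1] + mon6 ![2,2,3,2,2,2] + mon6 ![2,2,4,2,2,1] + mon6 ![1,2,3,2,1,4] + mon6 ![1,2,3,4,1,2] + mon6 ![1,2,4,2,2,2] + mon6 ![1,2,5,2,1,2] + mon6 ![1,4,3,2,1,2] + mon6 ![2,2,3,2,2,2] + mon6 ![2,2,4,2,1,2] + mon6 ![1,2,3,1,2,4] + mon6 ![1,2,3,1,4,2] + mon6 ![1,2,4,2,2,2] + mon6 ![1,2,5,1,2,2] + mon6 ![1,4,3,1,2,2] + mon6 ![2,2,3,2,2,2] + mon6 ![2,2,4,1,2,2] + mon6 ![1,2,5,1,2,2] + mon6 ![1,2,5,2,1,2]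 + mon6 ![1,2,5,2,2,1] + mon6 ![1,2,6,1,1,2] + mon6 ![1,2,6,1,2,1] + mon6 ![1,2,6,2,1,1] + mon6 ![1,4,5,1,1,1] + mon6 ![2,2,5,1,1,2] + mon6 ![2,2,5,1,2,1] + mon6 ![2,2,5,2,1,1] + mon6 ![2,2,6,1,1,1] := by
  rw [map_add, map_add, map_add, map_add, map_add, map_add, hcF2a, hcF2b, hcF2c, hcF2d]
  ring

lemma hitmem : homogeneousComponent 13 (sqT 6 (mon6 ![2,4,3,1,1,1]))
    + homogeneousComponent 13 (sqT 6 (mon6 ![1,2,3,2,2,1] + mon6 ![1,2,3,2,1,2] + mon6 ![1,2,3,1,2,2] + mon6 ![1,2,5,1,1,1]))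
    + homogeneousComponent 13 (sqT 6 (mon6 ![1,2,3,1,1,1])) ∈ hitSub 6 13 := by
  refine Submodule.add_mem _ (Submodule.add_mem _ ?_ ?_) ?_
  · exact Submodule.subset_span ⟨1, _, le_rfl, by norm_num, homF1, rfl⟩
  · exact Submodule.subset_span ⟨2, _, by norm_num, by norm_num, homF2, rfl⟩
  · exact Submodule.subset_span ⟨4, _, by norm_num, by norm_num, homF4, rfl⟩

lemma smem1 (a : Fin 6 → ℕ) (h13 : (∑ j, a j) = 13)
    (h0 : wvec a 0 = w331 0) (h1 : wvec a 1 < w331 1) : mon6 a ∈ smallerW :=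
  Submodule.subset_span ⟨a, h13, ⟨1, fun k hk => by interval_cases k; exact h0, h1⟩, rfl⟩

lemma smem : mon6 ![1,4,4,1,1,2] + mon6 ![1,4,4,1,2,1] + mon6 ![1,4,4,2,1,1] ∈ smallerW := by
  refine Submodule.add_mem _ (Submodule.add_mem _ ?_ ?_) ?_ <;>
    exact smem1 _ (by decide) (by decide) (by decide)

lemma wvec_hi (a : Fin 6 → ℕ) (ha : ∀ j, a j < 8) (n : ℕ) (hn : 3 ≤ n) : wvec a n = 0 := by
  rw [wvec]
  apply Finset.sum_eq_zero
  intro j _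
  have : a j < 2 ^ n := lt_of_lt_of_le (ha j) (by calc (8:ℕ) = 2^3 := rfl
    _ ≤ 2^n := Nat.pow_le_pow_right (by norm_num) hn)
  rw [Nat.testBit_lt_two_pow this]
  rfl


lemma hR4 : (4 : R6) = 0 := by rw [show (4:R6) = 2*2 by norm_num, hR2]; ring
lemma hR3 : (3 : R6) = 1 := by rw [show (3:R6) = 2+1 by norm_num, hR2]; ring

/-- `t_1 t_2^2 t_3^5 t_4^2 t_5^2 t_6` is congruent, modulo hit elements plus monomials of
strictly smaller weight vector, to the sum of the eight listed monomials, each of which is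
strictly smaller in the (weight, exponent)-left-lex order (here: same weight `(3,3,1)` and
lex-smaller exponent vector); hence it is inadmissible. -/
theorem inadmissible_mono_deg13 :
    (mon6 tvec + ∑ i : Fin 8, mon6 (vs i)) ∈ hitSub 6 13 ⊔ smallerW ∧
    (∀ i : Fin 8, wvec (vs i) = wvec tvec) ∧
    (∀ i : Fin 8, lexLtE (vs i) tvec) := by
  refine ⟨?_, ?_, ?_⟩
  · refine Submodule.mem_sup.2 ⟨_, hitmem, _, smem, ?_⟩
    rw [hcF1, hcF2, hcF4]
    simp only [tvec, vs, Fin.sum_univ_eight, c8_0, c8_1, c8_2, c8_3, c8_4, c8_5, c8_6, c8_7]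
    ring_nf
    simp only [hR2, hR3, hR4, mul_zero, zero_mul, mul_one, add_zero, zero_add]
  · intro i
    funext n
    rcases Nat.lt_or_ge n 3 with h | h
    · interval_cases n <;> fin_cases i <;> decide
    · rw [wvec_hi _ (by fin_cases i <;> decide) n h, wvec_hi _ (by decide) n h]
  · intro i
    fin_cases i
    · exact ⟨2, fun k hk => by revert hk; fin_cases k <;> decide, by decide⟩
    · exact ⟨2, fun k hk => by revert hk; fin_cases k <;> decide, by decide⟩
    · exact ⟨2, fun k hk => by revert hk; fin_cases k <;> decide, by decide⟩
    · exact ⟨2, fun k hk => by revert hk; fin_cases k <;> decide, by decide⟩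
    · exact ⟨2, fun k hk => by revert hk; fin_cases k <;> decide, by decide⟩
    · exact ⟨2, fun k hk => by revert hk; fin_cases k <;> decide, by decide⟩
    · exact ⟨3, fun k hk => by revert hk; fin_cases k <;> decide, by decide⟩
    · exact ⟨4, fun k hk => by revert hk; fin_cases k <;> decide, by decide⟩
end
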